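/- arXiv:2411.17885 — 7 statements merged into one kernel-verified Lean document; each statement's English description precedes it below -/
import Mathlib

section
/- If G is a 3-connected 2-cyclic simple graph on n ≥ 6 vertices, then the number of edges of G satisfies e(G) ≥ 2n. -/
/-- `G` is `k`-connected: more than `k` vertices, and removing fewer than `k`
vertices leaves a connected graph. -/
def SimpleGraph.KConnected {V : Type*} [Fintype V] (k : ℕ) (G : SimpleGraph V) : Prop :=
  k < Fintype.card V ∧ ∀ X : Set V, X.ncard < k → (G.induce (Xᶜ : Set V)).Connected
/-- The neighborhood of a vertex set `S`: vertices outside `S` with a neighbor in `S`. -/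
def SimpleGraph.setNbhd {V : Type*} (G : SimpleGraph V) (S : Set V) : Set V :=
  {v | v ∉ S ∧ ∃ u ∈ S, G.Adj u v}

/-- `G` is `k`-cyclic: every nonempty vertex set of size at most `k` is dominating
or has a cycle in its neighborhood. -/
def SimpleGraph.KCyclic {V : Type*} (k : ℕ) (G : SimpleGraph V) : Prop :=
  ∀ S : Set V, S.Nonempty → S.ncard ≤ k →
    S ∪ G.setNbhd S = Set.univ ∨ ¬ (G.induce (G.setNbhd S)).IsAcyclic

/-!
Every vertex has degree at least 3, the neighbourhood of a vertex of degree 3 is a triangle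
(2-cyclicity at that vertex), and vertices of degree 3 are pairwise non-adjacent (otherwise two
vertices would separate them from the rest). Let every vertex `x` split its surplus `deg x - 4`
evenly among its neighbours of degree 3. A degree-3 vertex could receive less than 1 from its
triangle only if the triangle consisted of degree-4 vertices, or if it had a twin of degree 3 and
two degree-4 vertices in the triangle; in both cases a single vertex cuts off a small part of the
graph, against 3-connectivity. Hence the total surplus `∑ (deg x - 4)` is nonnegative, that is,
`2 e(G) ≥ 4 n`.
-/

namespace SimpleGraph

open Finset

variable {V : Type*} [Fintype V] {G : SimpleGraph V}

theorem KConnected.card_le_card_union [DecidableEq V] [DecidableRel G.Adj] {k : ℕ}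
    (h : G.KConnected k) {A X : Finset V} (hX : #X < k) (hA : (A \ X).Nonempty)
    (hAX : ∀ x ∈ A, G.neighborFinset x ⊆ A ∪ X) : Fintype.card V ≤ #(A ∪ X) := by
  by_contra! hlt
  obtain ⟨z, hz⟩ : ∃ z, z ∉ A ∪ X := by
    by_contra! hall
    rw [eq_univ_of_forall hall, card_univ] at hlt
    exact hlt.false
  obtain ⟨a, ha⟩ := hA
  rw [mem_sdiff] at ha
  obtain ⟨p⟩ := (h.2 X (by rwa [Set.ncard_coe_finset])).preconnected
    ⟨a, ha.2⟩ ⟨z, fun hzX => hz (mem_union_right _ hzX)⟩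
  obtain ⟨d, -, hd₁, hd₂⟩ :=
    p.exists_boundary_dart {x | (x : V) ∈ A} ha.1 fun hzA => hz (mem_union_left _ hzA)
  rcases mem_union.1 (hAX _ hd₁ ((mem_neighborFinset _ _ _).2 d.adj)) with h' | h'
  · exact hd₂ h'
  · exact d.snd.2 h'

theorem KConnected.le_degree [DecidableEq V] [DecidableRel G.Adj] {k : ℕ} (h : G.KConnected k)
    (v : V) : k ≤ G.degree v := by
  by_contra! hlt
  have hcard := h.card_le_card_union (A := {v}) (X := G.neighborFinset v)
    (by rwa [card_neighborFinset_eq_degree]) ⟨v, by simp⟩ (by simp)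
  have := card_union_le {v} (G.neighborFinset v)
  rw [card_singleton, card_neighborFinset_eq_degree] at this
  have := h.1
  omega

theorem adj_of_not_isAcyclic {W : Type*} [Fintype W] {H : SimpleGraph W}
    (hW : Fintype.card W ≤ 3) (h : ¬ H.IsAcyclic) {x y : W} (hxy : x ≠ y) : H.Adj x y := by
  classical
  obtain ⟨u, c, hc⟩ : ∃ u, ∃ c : H.Walk u u, c.IsCycle := by simpa [IsAcyclic] using h
  have hlen : c.length = 3 := by
    have := hc.three_le_length
    have := hc.support_nodup.length_le_card
    rw [List.length_tail, c.length_support] at this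
    omega
  obtain ⟨s, hs⟩ := is3Clique_iff_exists_cycle_length_three.2 ⟨u, c, hc, hlen⟩
  have hs_univ : s = univ :=
    eq_univ_of_card s (by have := card_le_univ s; have := hs.card_eq; omega)
  exact hs.isClique (by simp [hs_univ]) (by simp [hs_univ]) hxy

theorem KCyclic.isClique_of_setNbhd_eq [DecidableEq V] {k : ℕ} (h : G.KCyclic k)
    {S N : Finset V} (hS : S.Nonempty) (hSk : #S ≤ k) (hN : G.setNbhd S = N) (hN₃ : #N ≤ 3)
    (hdom : #(S ∪ N) < Fintype.card V) : G.IsClique (N : Set V) := by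
  rcases h S (by simpa using hS) (by rwa [Set.ncard_coe_finset]) with hd | hc
  · rw [hN, ← coe_union, coe_eq_univ] at hd
    rw [hd, card_univ] at hdom
    exact absurd hdom (lt_irrefl _)
  · rw [hN] at hc
    intro x hx y hy hxy
    exact adj_of_not_isAcyclic (x := ⟨x, hx⟩) (y := ⟨y, hy⟩) (by simpa using hN₃) hc
      (by simpa using hxy)

theorem setNbhd_singleton [DecidableRel G.Adj] (v : V) :
    G.setNbhd ({v} : Finset V) = (G.neighborFinset v : Set V) := by
  ext u
  simp only [setNbhd, coe_singleton, Set.mem_singleton_iff, exists_eq_left, Set.mem_ofPred_eq,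
    coe_neighborFinset, mem_neighborSet]
  exact ⟨And.right, fun h => ⟨(G.ne_of_adj h).symm, h⟩⟩

section Weights

variable [DecidableRel G.Adj]

def degThreeNeighborFinset (x : V) : Finset V := {w ∈ G.neighborFinset x | G.degree w = 3}

/-- The share of the surplus `deg x - 4` that `x` hands to each neighbour of degree 3; it is `0`
(division by zero) when there is none. -/
def surplusShare (x : V) : ℚ := ((G.degree x : ℚ) - 4) / #(G.degThreeNeighborFinset x)

@[simp]
theorem mem_degThreeNeighborFinset {x w : V} :
    w ∈ G.degThreeNeighborFinset x ↔ G.Adj x w ∧ G.degree w = 3 := by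
  simp [degThreeNeighborFinset]

theorem card_degThreeNeighborFinset_pos {v x : V} (hv : G.degree v = 3) (hvx : G.Adj v x) :
    0 < #(G.degThreeNeighborFinset x) :=
  card_pos.2 ⟨v, mem_degThreeNeighborFinset.2 ⟨hvx.symm, hv⟩⟩

theorem surplusShare_nonneg {x : V} (hx : 4 ≤ G.degree x) : 0 ≤ G.surplusShare x := by
  have : (4 : ℚ) ≤ G.degree x := by exact_mod_cast hx
  exact div_nonneg (by linarith) (by positivity)

theorem le_surplusShare {x : V} {q : ℚ} (hK : 0 < #(G.degThreeNeighborFinset x))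
    (h : q * #(G.degThreeNeighborFinset x) + 4 ≤ G.degree x) : q ≤ G.surplusShare x := by
  rw [surplusShare, le_div_iff₀ (by exact_mod_cast hK)]
  linarith

theorem third_le_surplusShare {x : V} (hK : 0 < #(G.degThreeNeighborFinset x))
    (h₂ : #(G.degThreeNeighborFinset x) + 2 ≤ G.degree x) (h₅ : 5 ≤ G.degree x) :
    1 / 3 ≤ G.surplusShare x := by
  have h₂' : (#(G.degThreeNeighborFinset x) : ℚ) + 2 ≤ G.degree x := by exact_mod_cast h₂
  have h₅' : (5 : ℚ) ≤ G.degree x := by exact_mod_cast h₅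
  exact le_surplusShare hK (by linarith)

theorem half_le_surplusShare {x : V} (hK : 0 < #(G.degThreeNeighborFinset x))
    (h₃ : #(G.degThreeNeighborFinset x) + 3 ≤ G.degree x) (h₅ : 5 ≤ G.degree x) :
    1 / 2 ≤ G.surplusShare x := by
  have h₃' : (#(G.degThreeNeighborFinset x) : ℚ) + 3 ≤ G.degree x := by exact_mod_cast h₃
  have h₅' : (5 : ℚ) ≤ G.degree x := by exact_mod_cast h₅
  exact le_surplusShare hK (by linarith)

theorem one_le_surplusShare {x : V} (hK : 0 < #(G.degThreeNeighborFinset x))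
    (h₄ : #(G.degThreeNeighborFinset x) + 4 ≤ G.degree x) : 1 ≤ G.surplusShare x := by
  have h₄' : (#(G.degThreeNeighborFinset x) : ℚ) + 4 ≤ G.degree x := by exact_mod_cast h₄
  exact le_surplusShare hK (by linarith)

theorem card_mul_surplusShare_le {x : V} (hx : 3 ≤ G.degree x) :
    #(G.degThreeNeighborFinset x) * G.surplusShare x ≤
      G.degree x - 4 + if G.degree x = 3 then 1 else 0 := by
  have hx' : (3 : ℚ) ≤ G.degree x := by exact_mod_cast hx
  rcases Nat.eq_zero_or_pos #(G.degThreeNeighborFinset x) with hK | hK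
  · rw [hK, Nat.cast_zero, zero_mul]
    split_ifs with h3
    · rw [h3]; norm_num
    · have : (4 : ℚ) ≤ G.degree x := by exact_mod_cast (show 4 ≤ G.degree x by omega)
      linarith
  · rw [surplusShare, mul_div_cancel₀ _ (by positivity)]
    split_ifs <;> linarith

theorem sum_filter_sum_neighborFinset {M : Type*} [AddCommMonoid M] (p : V → Prop)
    [DecidablePred p] (f : V → M) :
    ∑ v with p v, ∑ x ∈ G.neighborFinset v, f x =
      ∑ x, #{w ∈ G.neighborFinset x | p w} • f x := by
  rw [sum_comm' (t' := univ) (s' := fun x => {w ∈ G.neighborFinset x | p w})]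
  · simp [sum_const]
  · intro v x
    simp [adj_comm, and_comm]

end Weights

variable [DecidableEq V] [DecidableRel G.Adj]

theorem isClique_neighborFinset_of_degree_eq_three (h2 : G.KCyclic 2)
    (hn : 5 ≤ Fintype.card V) {v : V} (hv : G.degree v = 3) :
    G.IsClique (G.neighborFinset v : Set V) := by
  refine h2.isClique_of_setNbhd_eq (singleton_nonempty v) (by simp) (setNbhd_singleton v)
    (by rw [card_neighborFinset_eq_degree, hv]) ?_
  have := card_union_le {v} (G.neighborFinset v)
  rw [card_singleton, card_neighborFinset_eq_degree, hv] at this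
  omega

theorem erase_subset_neighborFinset (h2 : G.KCyclic 2) (hn : 5 ≤ Fintype.card V) {v x : V}
    (hv : G.degree v = 3) (hx : x ∈ G.neighborFinset v) :
    (G.neighborFinset v).erase x ⊆ G.neighborFinset x := fun _ hu =>
  (mem_neighborFinset _ _ _).2 <| isClique_neighborFinset_of_degree_eq_three h2 hn hv hx
    (mem_of_mem_erase hu) (ne_of_mem_erase hu).symm

theorem insert_erase_subset_neighborFinset (h2 : G.KCyclic 2) (hn : 5 ≤ Fintype.card V)
    {v x : V} (hv : G.degree v = 3) (hx : x ∈ G.neighborFinset v) :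
    insert v ((G.neighborFinset v).erase x) ⊆ G.neighborFinset x :=
  insert_subset ((mem_neighborFinset _ _ _).2 ((mem_neighborFinset _ _ _).1 hx).symm)
    (erase_subset_neighborFinset h2 hn hv hx)

theorem card_insert_erase_neighborFinset {v x : V} (hv : G.degree v = 3)
    (hx : x ∈ G.neighborFinset v) : #(insert v ((G.neighborFinset v).erase x)) = 3 := by
  rw [card_insert_of_notMem (by simp), card_erase_of_mem hx, card_neighborFinset_eq_degree, hv]

theorem not_adj_of_degree_eq_three (h3 : G.KConnected 3) (h2 : G.KCyclic 2)
    (hn : 5 ≤ Fintype.card V) {v w : V} (hv : G.degree v = 3) (hw : G.degree w = 3) :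
    ¬ G.Adj v w := by
  intro hvw
  have hw_mem : w ∈ G.neighborFinset v := (mem_neighborFinset _ _ _).2 hvw
  have hNw : G.neighborFinset w = insert v ((G.neighborFinset v).erase w) :=
    (eq_of_subset_of_card_le (insert_erase_subset_neighborFinset h2 hn hv hw_mem)
      (by rw [card_insert_erase_neighborFinset hv hw_mem, card_neighborFinset_eq_degree, hw])).symm
  -- the two other neighbours of `v` separate `{v, w}` from the rest
  have hcard := h3.card_le_card_union (A := {v, w}) (X := (G.neighborFinset v).erase w)
    (by rw [card_erase_of_mem hw_mem, card_neighborFinset_eq_degree, hv]; norm_num)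
    ⟨v, by simp⟩ ?_
  · have hunion := card_union_le {v, w} ((G.neighborFinset v).erase w)
    rw [card_erase_of_mem hw_mem, card_neighborFinset_eq_degree, hv] at hunion
    have := card_le_two (a := v) (b := w)
    omega
  · intro x hx u hu
    simp only [mem_insert, mem_singleton] at hx
    rcases hx with rfl | rfl
    · by_cases huw : u = w <;> simp [huw, hu]
    · rw [hNw, mem_insert] at hu
      rcases hu with rfl | hu
      · simp
      · simp [hu]

theorem four_le_degree_of_adj (h3 : G.KConnected 3) (h2 : G.KCyclic 2)
    (hn : 5 ≤ Fintype.card V) {v x : V} (hv : G.degree v = 3) (hvx : G.Adj v x) :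
    4 ≤ G.degree x := by
  have := h3.le_degree x
  have : G.degree x ≠ 3 := fun hx => not_adj_of_degree_eq_three h3 h2 hn hv hx hvx
  omega

theorem card_degThreeNeighborFinset_add_card_le_degree {x : V} {s : Finset V}
    (hs : s ⊆ G.neighborFinset x) (hs₃ : ∀ y ∈ s, G.degree y ≠ 3) :
    #(G.degThreeNeighborFinset x) + #s ≤ G.degree x := by
  rw [← card_union_of_disjoint, ← card_neighborFinset_eq_degree]
  · exact card_le_card (union_subset (filter_subset _ _) hs)
  · exact Finset.disjoint_left.2 fun y hy hys => hs₃ y hys (mem_degThreeNeighborFinset.1 hy).2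

theorem card_degThreeNeighborFinset_add_two_le_degree (h3 : G.KConnected 3) (h2 : G.KCyclic 2)
    (hn : 5 ≤ Fintype.card V) {v x : V} (hv : G.degree v = 3) (hvx : G.Adj v x) :
    #(G.degThreeNeighborFinset x) + 2 ≤ G.degree x := by
  have hx : x ∈ G.neighborFinset v := (mem_neighborFinset _ _ _).2 hvx
  have h := card_degThreeNeighborFinset_add_card_le_degree
    (erase_subset_neighborFinset h2 hn hv hx) fun y hy hy₃ =>
      not_adj_of_degree_eq_three h3 h2 hn hv hy₃
        ((mem_neighborFinset _ _ _).1 (mem_of_mem_erase hy))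
  rwa [card_erase_of_mem hx, card_neighborFinset_eq_degree, hv] at h

theorem neighborFinset_eq_of_degree_eq (h3 : G.KConnected 3) (h2 : G.KCyclic 2)
    (hn : 5 ≤ Fintype.card V) {v x w : V} (hv : G.degree v = 3) (hvx : G.Adj v x)
    (hx : G.degree x = #(G.degThreeNeighborFinset x) + 2) (hw : G.degree w = 3)
    (hwx : G.Adj w x) : G.neighborFinset w = G.neighborFinset v := by
  have hxv : x ∈ G.neighborFinset v := (mem_neighborFinset _ _ _).2 hvx
  have hxw : x ∈ G.neighborFinset w := (mem_neighborFinset _ _ _).2 hwx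
  have hother : {y ∈ G.neighborFinset x | G.degree y ≠ 3} = (G.neighborFinset v).erase x := by
    refine (eq_of_subset_of_card_le (fun y hy => ?_) ?_).symm
    · exact mem_filter.2 ⟨erase_subset_neighborFinset h2 hn hv hxv hy, fun hy₃ =>
        not_adj_of_degree_eq_three h3 h2 hn hv hy₃
          ((mem_neighborFinset _ _ _).1 (mem_of_mem_erase hy))⟩
    · have := card_filter_add_card_filter_not (s := G.neighborFinset x) (G.degree · = 3)
      rw [card_neighborFinset_eq_degree, hx] at this
      rw [card_erase_of_mem hxv, card_neighborFinset_eq_degree, hv]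
      exact (Nat.add_left_cancel this.symm).ge
  refine eq_of_subset_of_card_le (fun u hu => ?_)
    (by rw [card_neighborFinset_eq_degree, card_neighborFinset_eq_degree, hv, hw])
  by_cases hux : u = x
  · rwa [hux]
  · have hu' : u ∈ {y ∈ G.neighborFinset x | G.degree y ≠ 3} :=
      mem_filter.2 ⟨erase_subset_neighborFinset h2 hn hw hxw (mem_erase.2 ⟨hux, hu⟩),
        fun hu₃ =>
          not_adj_of_degree_eq_three h3 h2 hn hw hu₃ ((mem_neighborFinset _ _ _).1 hu)⟩
    rw [hother] at hu'
    exact mem_of_mem_erase hu'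

theorem card_degThreeNeighborFinset_le_of_degree_eq (h3 : G.KConnected 3) (h2 : G.KCyclic 2)
    (hn : 5 ≤ Fintype.card V) {v x y : V} (hv : G.degree v = 3) (hvx : G.Adj v x)
    (hx : G.degree x = #(G.degThreeNeighborFinset x) + 2) (hvy : G.Adj v y) :
    #(G.degThreeNeighborFinset x) ≤ #(G.degThreeNeighborFinset y) := by
  refine card_le_card fun w hw => ?_
  rw [mem_degThreeNeighborFinset] at hw ⊢
  have hy : y ∈ G.neighborFinset w := by
    rw [neighborFinset_eq_of_degree_eq h3 h2 hn hv hvx hx hw.2 hw.1.symm]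
    exact (mem_neighborFinset _ _ _).2 hvy
  exact ⟨((mem_neighborFinset _ _ _).1 hy).symm, hw.2⟩

theorem neighborFinset_eq_insert_of_degree_eq_four (h2 : G.KCyclic 2)
    (hn : 5 ≤ Fintype.card V) {v x r : V} (hv : G.degree v = 3) (hx : x ∈ G.neighborFinset v)
    (hx₄ : G.degree x = 4) (hxr : G.Adj x r) (hr : r ∉ insert v (G.neighborFinset v)) :
    G.neighborFinset x = insert r (insert v ((G.neighborFinset v).erase x)) := by
  refine (eq_of_subset_of_card_le (insert_subset ((mem_neighborFinset _ _ _).2 hxr)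
    (insert_erase_subset_neighborFinset h2 hn hv hx)) ?_).symm
  rw [card_insert_of_notMem fun h => hr (insert_subset_insert _ (erase_subset _ _) h),
    card_insert_erase_neighborFinset hv hx, card_neighborFinset_eq_degree, hx₄]

theorem degree_ne_four_of_neighborFinset_eq (h3 : G.KConnected 3) (h2 : G.KCyclic 2)
    (hn : 6 ≤ Fintype.card V) {v v' a b : V} (hv : G.degree v = 3) (hvv' : v ≠ v')
    (hN : G.neighborFinset v = G.neighborFinset v') (ha : a ∈ G.neighborFinset v)
    (hb : b ∈ G.neighborFinset v) (hab : a ≠ b) (ha₄ : G.degree a = 4) :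
    G.degree b ≠ 4 := by
  intro hb₄
  have hv' : v' ∉ insert v (G.neighborFinset v) := by
    simp only [mem_insert, not_or]
    exact ⟨Ne.symm hvv', hN ▸ by simp⟩
  have hNx : ∀ x ∈ G.neighborFinset v, G.degree x = 4 →
      G.neighborFinset x = insert v' (insert v ((G.neighborFinset v).erase x)) :=
    fun x hx hx₄ => neighborFinset_eq_insert_of_degree_eq_four h2 (by omega) hv hx hx₄
      ((mem_neighborFinset _ _ _).1 (hN ▸ hx)).symm hv'
  have hX : #(((G.neighborFinset v).erase a).erase b) = 1 := by
    rw [card_erase_of_mem (mem_erase.2 ⟨Ne.symm hab, hb⟩), card_erase_of_mem ha,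
      card_neighborFinset_eq_degree, hv]
  have hcover : insert v' (insert v (G.neighborFinset v)) ⊆
      {v, v', a, b} ∪ ((G.neighborFinset v).erase a).erase b := by
    intro u hu
    simp only [mem_insert] at hu
    by_cases hua : u = a
    · simp [hua]
    by_cases hub : u = b
    · simp [hub]
    rcases hu with rfl | rfl | hu
    · simp
    · simp
    · exact mem_union_right _ (mem_erase.2 ⟨hub, mem_erase.2 ⟨hua, hu⟩⟩)
  -- the third neighbour of `v` separates `{v, v', a, b}` from the rest
  have hcard := h3.card_le_card_union (A := {v, v', a, b})
    (X := ((G.neighborFinset v).erase a).erase b) (by omega) ⟨v, by simp⟩ fun x hx => ?_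
  · have := card_union_le {v, v', a, b} (((G.neighborFinset v).erase a).erase b)
    have := card_le_four (a := v) (b := v') (c := a) (d := b)
    omega
  · refine subset_trans ?_ hcover
    simp only [mem_insert, mem_singleton] at hx
    rcases hx with rfl | rfl | rfl | rfl
    · exact (subset_insert _ _).trans (subset_insert _ _)
    · exact hN ▸ (subset_insert _ _).trans (subset_insert _ _)
    · rw [hNx x ha ha₄]
      exact insert_subset_insert _ (insert_subset_insert _ (erase_subset _ _))
    · rw [hNx x hb hb₄]
      exact insert_subset_insert _ (insert_subset_insert _ (erase_subset _ _))

theorem card_neighborFinset_sdiff_insert_add_three (h2 : G.KCyclic 2) (hn : 5 ≤ Fintype.card V)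
    {v a : V} (hv : G.degree v = 3) (ha : a ∈ G.neighborFinset v) :
    #(G.neighborFinset a \ insert v (G.neighborFinset v)) + 3 = G.degree a := by
  have hinter : G.neighborFinset a ∩ insert v (G.neighborFinset v) =
      insert v ((G.neighborFinset v).erase a) := by
    refine subset_antisymm (fun u hu => ?_)
      (subset_inter (insert_erase_subset_neighborFinset h2 hn hv ha)
        (insert_subset_insert _ (erase_subset _ _)))
    obtain ⟨hau, hu⟩ := mem_inter.1 hu
    rcases mem_insert.1 hu with rfl | hu
    · exact mem_insert_self _ _
    · exact mem_insert_of_mem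
        (mem_erase.2 ⟨(G.ne_of_adj ((mem_neighborFinset _ _ _).1 hau)).symm, hu⟩)
  have := card_sdiff_add_card_inter (G.neighborFinset a) (insert v (G.neighborFinset v))
  rwa [hinter, card_insert_erase_neighborFinset hv ha, card_neighborFinset_eq_degree] at this

theorem setNbhd_pair (v a : V) :
    G.setNbhd ({v, a} : Finset V) =
      ((G.neighborFinset v).erase a ∪ (G.neighborFinset a \ insert v (G.neighborFinset v)) :
        Finset V) := by
  ext u
  have hvu : G.Adj v u → u ≠ v := fun h => (G.ne_of_adj h).symm
  have hau : G.Adj a u → u ≠ a := fun h => (G.ne_of_adj h).symm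
  simp [setNbhd]
  tauto

theorem exists_mem_neighborFinset_degree_ne_four (h3 : G.KConnected 3) (h2 : G.KCyclic 2)
    (hn : 6 ≤ Fintype.card V) {v : V} (hv : G.degree v = 3) :
    ∃ x ∈ G.neighborFinset v, G.degree x ≠ 4 := by
  by_contra! h₄
  obtain ⟨a, ha⟩ : (G.neighborFinset v).Nonempty := by
    rw [← card_pos, card_neighborFinset_eq_degree, hv]; norm_num
  obtain ⟨r, hr⟩ := card_eq_one.1 <| by
    have := card_neighborFinset_sdiff_insert_add_three h2 (by omega) hv ha
    rw [h₄ a ha] at this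
    exact (by omega : #(G.neighborFinset a \ insert v (G.neighborFinset v)) = 1)
  have hr' := mem_sdiff.1 (hr ▸ mem_singleton_self r)
  have hN₂ : #((G.neighborFinset v).erase a) = 2 := by
    rw [card_erase_of_mem ha, card_neighborFinset_eq_degree, hv]
  -- by 2-cyclicity at `{v, a}`, the fourth neighbour `r` of `a` is adjacent to the rest of `N(v)`
  have hcl := h2.isClique_of_setNbhd_eq (S := {v, a}) ⟨v, by simp⟩ card_le_two
    (by rw [setNbhd_pair, hr])
    ((card_union_le _ _).trans (by rw [card_singleton, hN₂]))
    (lt_of_le_of_lt ((card_union_le _ _).trans (add_le_add card_le_two (card_union_le _ _)))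
      (by rw [card_singleton, hN₂]; omega))
  have hNx : ∀ x ∈ G.neighborFinset v,
      G.neighborFinset x = insert r (insert v ((G.neighborFinset v).erase x)) := by
    intro x hx
    refine neighborFinset_eq_insert_of_degree_eq_four h2 (by omega) hv hx (h₄ x hx) ?_ hr'.2
    by_cases hxa : x = a
    · exact hxa ▸ (mem_neighborFinset _ _ _).1 hr'.1
    · exact hcl (mem_union_left _ (mem_erase.2 ⟨hxa, hx⟩))
        (mem_union_right _ (mem_singleton_self r)) fun hxr => hr'.2 (hxr ▸ mem_insert_of_mem hx)
  -- hence `r` separates `insert v N(v)` from the rest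
  have hrv : r ≠ v := by
    rintro rfl
    exact hr'.2 (mem_insert_self r _)
  have hcard := h3.card_le_card_union (A := insert v (G.neighborFinset v)) (X := {r})
    (by simp) ⟨v, by simp [Ne.symm hrv]⟩ fun x hx => ?_
  · have := card_union_le (insert v (G.neighborFinset v)) {r}
    rw [card_insert_of_notMem (by simp), card_neighborFinset_eq_degree, hv, card_singleton] at this
    omega
  · rcases mem_insert.1 hx with rfl | hx
    · exact (subset_insert _ _).trans subset_union_left
    · rw [hNx x hx]
      exact insert_subset (mem_union_right _ (mem_singleton_self r))
        ((insert_subset_insert _ (erase_subset _ _)).trans subset_union_left)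

theorem card_degThreeNeighborFinset_eq_one (h3 : G.KConnected 3) (h2 : G.KCyclic 2)
    (hn : 6 ≤ Fintype.card V) {v x y : V} (hv : G.degree v = 3) (hvx : G.Adj v x)
    (hvy : G.Adj v y) (hxy : x ≠ y) (hx₄ : G.degree x = 4) (hy₄ : G.degree y = 4) :
    #(G.degThreeNeighborFinset x) = 1 := by
  have hle := card_degThreeNeighborFinset_add_two_le_degree h3 h2 (by omega) hv hvx
  have hpos := card_degThreeNeighborFinset_pos hv hvx
  by_contra hne
  obtain ⟨v', hv', hv'v⟩ := exists_mem_ne (show 1 < #(G.degThreeNeighborFinset x) by omega) v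
  rw [mem_degThreeNeighborFinset] at hv'
  have hN := neighborFinset_eq_of_degree_eq h3 h2 (by omega) hv hvx (by omega) hv'.2 hv'.1.symm
  exact degree_ne_four_of_neighborFinset_eq h3 h2 hn hv (Ne.symm hv'v) hN.symm
    ((mem_neighborFinset _ _ _).2 hvx) ((mem_neighborFinset _ _ _).2 hvy) hxy hx₄ hy₄

theorem card_degThreeNeighborFinset_add_four_le_degree (h3 : G.KConnected 3)
    (h2 : G.KCyclic 2) (hn : 5 ≤ Fintype.card V) {v x y z : V} (hv : G.degree v = 3)
    (hvx : G.Adj v x) (hvy : G.Adj v y) (hvz : G.Adj v z) (hxy : x ≠ y) (hxz : x ≠ z)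
    (hyz : y ≠ z) (hx : #(G.degThreeNeighborFinset x) = 1)
    (hz : #(G.degThreeNeighborFinset z) = 1) (hy : 5 ≤ G.degree y) :
    #(G.degThreeNeighborFinset y) + 4 ≤ G.degree y := by
  have hpos := card_degThreeNeighborFinset_pos hv hvy
  rcases (show #(G.degThreeNeighborFinset y) = 1 ∨ 1 < #(G.degThreeNeighborFinset y) by omega)
    with hy₁ | hy₁
  · omega
  obtain ⟨w, hw, hwv⟩ := exists_mem_ne hy₁ v
  rw [mem_degThreeNeighborFinset] at hw
  have hyw : y ∈ G.neighborFinset w := (mem_neighborFinset _ _ _).2 hw.1.symm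
  have hnot : ∀ u, G.Adj v u → #(G.degThreeNeighborFinset u) = 1 → u ∉ G.neighborFinset w :=
    fun u hvu hu huw => hwv <| card_le_one.1 hu.le w
      (mem_degThreeNeighborFinset.2 ⟨((mem_neighborFinset _ _ _).1 huw).symm, hw.2⟩) v
      (mem_degThreeNeighborFinset.2 ⟨hvu.symm, hv⟩)
  have hmem : ∀ u, G.Adj v u → u ∈ G.neighborFinset v := fun u => (mem_neighborFinset _ _ _).2
  have h := card_degThreeNeighborFinset_add_card_le_degree (G := G) (x := y)
    (s := {x, z} ∪ (G.neighborFinset w).erase y) (fun u hu => ?_) (fun u hu => ?_)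
  · rwa [card_union_of_disjoint, card_pair hxz, card_erase_of_mem hyw,
      card_neighborFinset_eq_degree, hw.2] at h
    refine Finset.disjoint_left.2 fun u hu hu' => ?_
    simp only [mem_insert, mem_singleton] at hu
    rcases hu with rfl | rfl
    · exact hnot u hvx hx (mem_of_mem_erase hu')
    · exact hnot u hvz hz (mem_of_mem_erase hu')
  · rw [mem_union, mem_insert, mem_singleton] at hu
    rcases hu with (rfl | rfl) | hu
    · exact erase_subset_neighborFinset h2 hn hv (hmem y hvy) (mem_erase.2 ⟨hxy, hmem u hvx⟩)
    · exact erase_subset_neighborFinset h2 hn hv (hmem y hvy)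
        (mem_erase.2 ⟨Ne.symm hyz, hmem u hvz⟩)
    · exact erase_subset_neighborFinset h2 hn hw.2 hyw hu
  · rw [mem_union, mem_insert, mem_singleton, mem_erase] at hu
    rcases hu with (rfl | rfl) | hu
    · exact fun hu₃ => not_adj_of_degree_eq_three h3 h2 hn hv hu₃ hvx
    · exact fun hu₃ => not_adj_of_degree_eq_three h3 h2 hn hv hu₃ hvz
    · exact fun hu₃ => not_adj_of_degree_eq_three h3 h2 hn hw.2 hu₃
        ((mem_neighborFinset _ _ _).1 hu.2)

-- If the only neighbours of `u` of degree other than 3 lie in `N(v)`, then all degree-3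
-- neighbours of `u` are adjacent to `x`; as `x` has at most two of them, `deg u ≤ 4`.
theorem card_degThreeNeighborFinset_add_three_le_degree (h3 : G.KConnected 3)
    (h2 : G.KCyclic 2) (hn : 5 ≤ Fintype.card V) {v x u : V} (hv : G.degree v = 3)
    (hvx : G.Adj v x) (hvu : G.Adj v u) (hx : G.degree x = 4) (hu : 5 ≤ G.degree u) :
    #(G.degThreeNeighborFinset u) + 3 ≤ G.degree u := by
  have := card_degThreeNeighborFinset_add_two_le_degree h3 h2 hn hv hvx
  have := card_degThreeNeighborFinset_add_two_le_degree h3 h2 hn hv hvu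
  by_contra hlt
  have := card_degThreeNeighborFinset_le_of_degree_eq h3 h2 hn hv hvu (by omega) hvx
  omega

theorem one_le_surplusShare_add_surplusShare (h3 : G.KConnected 3) (h2 : G.KCyclic 2)
    (hn : 6 ≤ Fintype.card V) {v x y z : V} (hv : G.degree v = 3) (hvx : G.Adj v x)
    (hvy : G.Adj v y) (hvz : G.Adj v z) (hxy : x ≠ y) (hxz : x ≠ z) (hyz : y ≠ z)
    (hx : G.degree x = 4) : 1 ≤ G.surplusShare y + G.surplusShare z := by
  have hn₅ : 5 ≤ Fintype.card V := by omega
  have hNv : G.neighborFinset v = {x, y, z} := by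
    refine (eq_of_subset_of_card_le ?_ ?_).symm
    · simp [insert_subset_iff, hvx, hvy, hvz]
    · rw [card_neighborFinset_eq_degree, hv]
      exact (card_eq_three.2 ⟨x, y, z, hxy, hxz, hyz, rfl⟩).ge
  obtain ⟨u, hu, hu₄⟩ := exists_mem_neighborFinset_degree_ne_four h3 h2 hn hv
  rw [hNv, mem_insert, mem_insert, mem_singleton] at hu
  have h₄ : ∀ u, G.Adj v u → 4 ≤ G.degree u := fun u => four_le_degree_of_adj h3 h2 hn₅ hv
  by_cases hy : G.degree y = 4
  · have hz : 5 ≤ G.degree z := by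
      rcases hu with rfl | rfl | rfl <;> first | omega | exact (h₄ _ hvz).lt_of_ne' hu₄
    have := one_le_surplusShare (card_degThreeNeighborFinset_pos hv hvz)
      (card_degThreeNeighborFinset_add_four_le_degree h3 h2 hn₅ hv hvx hvz hvy hxz hxy
        (Ne.symm hyz) (card_degThreeNeighborFinset_eq_one h3 h2 hn hv hvx hvy hxy hx hy)
        (card_degThreeNeighborFinset_eq_one h3 h2 hn hv hvy hvx (Ne.symm hxy) hy hx) hz)
    linarith [surplusShare_nonneg (G := G) (h₄ _ hvy)]
  by_cases hz : G.degree z = 4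
  · have hy : 5 ≤ G.degree y := (h₄ _ hvy).lt_of_ne' hy
    have := one_le_surplusShare (card_degThreeNeighborFinset_pos hv hvy)
      (card_degThreeNeighborFinset_add_four_le_degree h3 h2 hn₅ hv hvx hvy hvz hxy hxz
        hyz (card_degThreeNeighborFinset_eq_one h3 h2 hn hv hvx hvz hxz hx hz)
        (card_degThreeNeighborFinset_eq_one h3 h2 hn hv hvz hvx (Ne.symm hxz) hz hx) hy)
    linarith [surplusShare_nonneg (G := G) (h₄ _ hvz)]
  have hy : 5 ≤ G.degree y := (h₄ _ hvy).lt_of_ne' hy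
  have hz : 5 ≤ G.degree z := (h₄ _ hvz).lt_of_ne' hz
  linarith [half_le_surplusShare (card_degThreeNeighborFinset_pos hv hvy)
      (card_degThreeNeighborFinset_add_three_le_degree h3 h2 hn₅ hv hvx hvy hx hy) hy,
    half_le_surplusShare (card_degThreeNeighborFinset_pos hv hvz)
      (card_degThreeNeighborFinset_add_three_le_degree h3 h2 hn₅ hv hvx hvz hx hz) hz]

theorem one_le_sum_surplusShare (h3 : G.KConnected 3) (h2 : G.KCyclic 2)
    (hn : 6 ≤ Fintype.card V) {v : V} (hv : G.degree v = 3) :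
    1 ≤ ∑ x ∈ G.neighborFinset v, G.surplusShare x := by
  obtain ⟨a, b, c, hab, hac, hbc, hN⟩ :=
    card_eq_three.1 (show #(G.neighborFinset v) = 3 by rw [card_neighborFinset_eq_degree, hv])
  have hadj : ∀ x ∈ ({a, b, c} : Finset V), G.Adj v x := fun x hx =>
    (mem_neighborFinset _ _ _).1 (hN ▸ hx)
  have ha := hadj a (by simp)
  have hb := hadj b (by simp)
  have hc := hadj c (by simp)
  have h₄ : ∀ u, G.Adj v u → 4 ≤ G.degree u := fun u =>
    four_le_degree_of_adj h3 h2 (by omega) hv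
  have h₀ : ∀ x, G.Adj v x → 0 ≤ G.surplusShare x := fun x hx =>
    surplusShare_nonneg (h₄ _ hx)
  rw [hN, sum_insert (by simp [hab, hac]), sum_insert (by simp [hbc]), sum_singleton]
  by_cases ha₄ : G.degree a = 4
  · linarith [h₀ a ha,
      one_le_surplusShare_add_surplusShare h3 h2 hn hv ha hb hc hab hac hbc ha₄]
  by_cases hb₄ : G.degree b = 4
  · linarith [h₀ b hb, one_le_surplusShare_add_surplusShare h3 h2 hn hv hb ha hc
      (Ne.symm hab) hbc hac hb₄]
  by_cases hc₄ : G.degree c = 4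
  · linarith [h₀ c hc, one_le_surplusShare_add_surplusShare h3 h2 hn hv hc ha hb
      (Ne.symm hac) (Ne.symm hbc) hab hc₄]
  have h₃ : ∀ x, G.Adj v x → G.degree x ≠ 4 → 1 / 3 ≤ G.surplusShare x :=
    fun x hx hx₄ => third_le_surplusShare (card_degThreeNeighborFinset_pos hv hx)
      (card_degThreeNeighborFinset_add_two_le_degree h3 h2 (by omega) hv hx)
      ((h₄ _ hx).lt_of_ne' hx₄)
  linarith [h₃ a ha ha₄, h₃ b hb hb₄, h₃ c hc hc₄]

theorem four_mul_card_le_sum_degree (h3 : G.KConnected 3) (h2 : G.KCyclic 2)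
    (hn : 6 ≤ Fintype.card V) : 4 * Fintype.card V ≤ ∑ v, G.degree v := by
  have key : (#{v | G.degree v = 3} : ℚ) ≤
      ∑ x, ((G.degree x : ℚ) - 4 + if G.degree x = 3 then 1 else 0) := calc
    _ = ∑ v with G.degree v = 3, (1 : ℚ) := by simp
    _ ≤ ∑ v with G.degree v = 3, ∑ x ∈ G.neighborFinset v, G.surplusShare x :=
        sum_le_sum fun v hv => one_le_sum_surplusShare h3 h2 hn (mem_filter.1 hv).2
    _ = ∑ x, #(G.degThreeNeighborFinset x) * G.surplusShare x := by
        simp [sum_filter_sum_neighborFinset, degThreeNeighborFinset]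
    _ ≤ _ := sum_le_sum fun x _ => card_mul_surplusShare_le (h3.le_degree x)
  rw [sum_add_distrib, sum_boole, sum_sub_distrib] at key
  simp only [sum_const, card_univ, nsmul_eq_mul] at key
  exact_mod_cast (show (4 * Fintype.card V : ℚ) ≤ ∑ v, (G.degree v : ℚ) by linarith)

end SimpleGraph

/-- A 3-connected 2-cyclic graph on `n ≥ 6` vertices has at least `2n` edges. -/
theorem stmt_2 {V : Type*} [Fintype V] (G : SimpleGraph V)
    (h3 : G.KConnected 3) (h2 : G.KCyclic 2) (hn : 6 ≤ Fintype.card V) :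
    2 * Fintype.card V ≤ G.edgeSet.ncard := by
  classical
  have h := G.four_mul_card_le_sum_degree h3 h2 hn
  rw [G.sum_degrees_eq_twice_card_edges] at h
  rw [Set.ncard_eq_toFinset_card']
  change _ ≤ G.edgeFinset.card
  omega
end

section
/- Let 2 ≤ α ≤ 3 be a real number and let G be a connected simple graph on n vertices with no forest cut such that e(G) < α(n − 3) + 3, and suppose that every connected simple graph H on fewer than n vertices with no forest cut satisfies e(H) ≥ α(|V(H)| − 3) + 3. Then no vertex of degree 4 in G has a cycle of length 4 in its neighborhood, i.e., for every vertex v of degree 4, the subgraph induced by the neighborhood of v does not contain a 4-cycle. -/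
/-- `S` is a vertex cut of `G`: deleting `S` leaves a disconnected graph,
i.e. two vertices outside `S` with no path between them. -/
def SimpleGraph.IsVertexCut {V : Type*} (G : SimpleGraph V) (S : Set V) : Prop :=
  ¬ (G.induce (Sᶜ : Set V)).Preconnected

/-- `S` is a forest cut of `G`: a vertex cut inducing an acyclic subgraph. -/
def SimpleGraph.IsForestCut {V : Type*} (G : SimpleGraph V) (S : Set V) : Prop :=
  G.IsVertexCut S ∧ (G.induce S).IsAcyclic

open SimpleGraph Set Function

namespace FCAux


variable {V : Type*} {W : Type*}

lemma induce_adj_mk {K : SimpleGraph V} {B : Set V} {x y : V} (hx : x ∈ B) (hy : y ∈ B)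
    (h : K.Adj x y) : (K.induce B).Adj ⟨x, hx⟩ ⟨y, hy⟩ := by
  simpa using h

lemma induce_mono_left {K K' : SimpleGraph V} (h : K ≤ K') (B : Set V) :
    K.induce B ≤ K'.induce B := by
  intro x y hxy
  simp only [comap_adj, Embedding.coe_subtype] at hxy ⊢
  exact h hxy

lemma reachable_induce_of_walk' (K : SimpleGraph V) {B : Set V} {s t : V}
    (q : K.Walk s t) (h : ∀ w ∈ q.support, w ∈ B) :
    (K.induce B).Reachable ⟨s, h s q.start_mem_support⟩ ⟨t, h t q.end_mem_support⟩ := by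
  induction q with
  | nil => exact Reachable.refl _
  | @cons u x w hadj p ih =>
    refine Reachable.trans (Adj.reachable ?_) (ih fun z hz => h z (by simp [hz]))
    exact induce_adj_mk _ _ hadj

lemma walk_restrict {K : SimpleGraph V} {A B : Set V} :
    ∀ {s t : ↥A} (q : (K.induce A).Walk s t) (h : ∀ w ∈ q.support, (w : V) ∈ B),
    ∃ q' : (K.induce B).Walk ⟨s, h s q.start_mem_support⟩ ⟨t, h t q.end_mem_support⟩,
      q'.support.map Subtype.val = q.support.map Subtype.val ∧
      q'.edges.map (Sym2.map Subtype.val) = q.edges.map (Sym2.map Subtype.val) := by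
  intro s t q
  induction q with
  | nil => exact fun h => ⟨SimpleGraph.Walk.nil, by simp, by simp⟩
  | @cons u x w hadj p ih =>
    intro h
    obtain ⟨q', hsup, hedg⟩ := ih fun z hz => h z (by simp [hz])
    refine ⟨SimpleGraph.Walk.cons (induce_adj_mk _ _ (by simpa using hadj)) q', ?_, ?_⟩
    · simpa using hsup
    · simpa using hedg

lemma reachable_restrict {K : SimpleGraph V} {A B : Set V} {s t : ↥A}
    (q : (K.induce A).Walk s t) (h : ∀ w ∈ q.support, (w : V) ∈ B) :
    (K.induce B).Reachable ⟨s, h s q.start_mem_support⟩ ⟨t, h t q.end_mem_support⟩ :=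
  (walk_restrict q h).choose.reachable

lemma isCycle_restrict {K : SimpleGraph V} {A B : Set V} {s : ↥A}
    (q : (K.induce A).Walk s s) (hcyc : q.IsCycle)
    (h : ∀ w ∈ q.support, (w : V) ∈ B) :
    ∃ (s' : ↥B) (q' : (K.induce B).Walk s' s'), q'.IsCycle := by
  obtain ⟨q', hsup, hedg⟩ := walk_restrict q h
  refine ⟨_, q', ?_⟩
  have hinjA2 : Function.Injective (Sym2.map (Subtype.val : ↥A → V)) :=
    Sym2.map.injective Subtype.val_injective
  rw [SimpleGraph.Walk.isCycle_def, SimpleGraph.Walk.isTrail_def]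
  refine ⟨?_, ?_, ?_⟩
  · have : (q'.edges.map (Sym2.map Subtype.val)).Nodup := by
      rw [hedg]; exact hcyc.isTrail.edges_nodup.map hinjA2
    exact this.of_map _
  · intro hnil
    have h1 : q'.support.length = q.support.length := by
      have := congrArg List.length hsup
      simpa using this
    have h3 := hcyc.three_le_length
    rw [hnil] at h1
    rw [SimpleGraph.Walk.length_support, SimpleGraph.Walk.length_support] at h1
    simp only [SimpleGraph.Walk.length_nil] at h1
    omega
  · have : (q'.support.tail.map Subtype.val).Nodup := by
      have h2 := congrArg List.tail hsup
      rw [← List.map_tail, ← List.map_tail] at h2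
      rw [h2]
      exact hcyc.support_nodup.map Subtype.val_injective
    exact this.of_map _

lemma exists_nbr_walk {G : SimpleGraph V} {A : Set V} :
    ∀ {u vv : V} (W : G.Walk u vv), (∀ z ∈ W.support, z ∈ A) → u ≠ vv →
    ∃ y, G.Adj vv y ∧ ∃ q : G.Walk u y, ∀ z ∈ q.support, z ∈ A ∧ z ≠ vv := by
  intro u vv W
  induction W with
  | nil => exact fun _ huv => absurd rfl huv
  | @cons u x w hadj p ih =>
    intro hA huv
    by_cases hx : x = w
    · subst hx
      exact ⟨u, hadj.symm, SimpleGraph.Walk.nil, by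
        intro z hz
        simp only [SimpleGraph.Walk.support_nil, List.mem_singleton] at hz
        subst hz
        exact ⟨hA z (by simp), huv⟩⟩
    · obtain ⟨y, hy, q, hq⟩ := ih (fun z hz => hA z (by simp [hz])) hx
      exact ⟨y, hy, SimpleGraph.Walk.cons hadj q, by
        intro z hz
        rw [SimpleGraph.Walk.support_cons, List.mem_cons] at hz
        rcases hz with rfl | hz
        · exact ⟨hA z (by simp), huv⟩
        · exact hq z hz⟩

/-- induce-induce collapse iso -/
noncomputable def isoInduceInduce (K : SimpleGraph V) (T : Set V) (S : Set ↥T) :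
    (K.induce T).induce S ≃g K.induce (Subtype.val '' S) where
  toEquiv := Equiv.Set.image Subtype.val S Subtype.val_injective
  map_rel_iff' := by
    intro x y
    simp [Equiv.Set.image, Equiv.Set.imageOfInjOn]

lemma acyclic_of_le {K K' : SimpleGraph V} (h : K ≤ K') (hK' : K'.IsAcyclic) :
    K.IsAcyclic := by
  intro u p hp
  exact hK' (p.mapLe h) (hp.mapLe h)

lemma acyclic_iso {K : SimpleGraph V} {K' : SimpleGraph W} (f : K ≃g K')
    (hK : K.IsAcyclic) : K'.IsAcyclic := by
  intro u p hp
  exact hK (p.map f.symm.toHom) (hp.map f.symm.injective)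

noncomputable def isoInduce {K₁ : SimpleGraph V} {K₂ : SimpleGraph W} (f : K₁ ≃g K₂) (S : Set W) :
    K₁.induce (f.toEquiv ⁻¹' S) ≃g K₂.induce S where
  toEquiv := f.toEquiv.subtypeEquiv (fun a => Iff.rfl)
  map_rel_iff' := by
    intro x y
    simp only [comap_adj, Embedding.coe_subtype, Equiv.subtypeEquiv_apply]
    exact f.map_rel_iff

lemma forestcut_transfer {K₁ : SimpleGraph V} {K₂ : SimpleGraph W} (f : K₁ ≃g K₂)
    (h : ∀ S : Set V, ¬ K₁.IsForestCut S) : ∀ S : Set W, ¬ K₂.IsForestCut S := by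
  intro S hS
  obtain ⟨hcut, hfor⟩ := hS
  refine h (f.toEquiv ⁻¹' S) ⟨?_, ?_⟩
  · intro hpre
    apply hcut
    have hceq : (f.toEquiv ⁻¹' S)ᶜ = f.toEquiv ⁻¹' Sᶜ := by
      ext x; simp
    rw [hceq] at hpre
    exact ((isoInduce f Sᶜ).preconnected_iff).mp hpre
  · intro u p hp
    exact hfor (p.map (isoInduce f S).toHom) (hp.map (isoInduce f S).injective)


lemma c4cycle {V : Type*} {A : SimpleGraph V} {x1 x2 x3 x4 : V}
    (h12 : A.Adj x1 x2) (h23 : A.Adj x2 x3) (h34 : A.Adj x3 x4) (h41 : A.Adj x4 x1)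
    (d12 : x1 ≠ x2) (d13 : x1 ≠ x3) (d14 : x1 ≠ x4)
    (d23 : x2 ≠ x3) (d24 : x2 ≠ x4) (d34 : x3 ≠ x4) :
    ∃ w : A.Walk x1 x1, w.IsCycle := by
  refine ⟨Walk.cons h12 (Walk.cons h23 (Walk.cons h34 (Walk.cons h41 Walk.nil))), ?_⟩
  rw [Walk.isCycle_def, Walk.isTrail_def]
  refine ⟨?_, by simp, ?_⟩
  · simp only [Walk.edges_cons, Walk.edges_nil, List.nodup_cons, List.mem_cons,
      List.not_mem_nil, or_false, List.nodup_nil, and_true, Sym2.eq_iff]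
    push_neg
    tauto
  · simp only [Walk.support_cons, Walk.support_nil, List.tail_cons, List.nodup_cons,
      List.mem_cons, List.not_mem_nil, or_false, List.mem_singleton, List.nodup_nil,
      and_true]
    push_neg
    tauto

lemma key {V : Type*} [Fintype V] (α : ℝ) (hα3 : α ≤ 3)
    (G : SimpleGraph V) (hconn : G.Connected)
    (hfc : ∀ S : Set V, ¬ G.IsForestCut S)
    (hsmall : (G.edgeSet.ncard : ℝ) < α * ((Fintype.card V : ℝ) - 3) + 3)
    (hmin : ∀ m : ℕ, m < Fintype.card V → ∀ H : SimpleGraph (Fin m),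
      H.Connected → (∀ S : Set (Fin m), ¬ H.IsForestCut S) →
      α * ((m : ℝ) - 3) + 3 ≤ (H.edgeSet.ncard : ℝ))
    (v a b c d : V) (hdeg : (G.neighborSet v).ncard = 4)
    (hN : G.neighborSet v = {a, b, c, d})
    (hab' : a ≠ b) (hac' : a ≠ c) (had' : a ≠ d)
    (hbc' : b ≠ c) (hbd' : b ≠ d) (hcd' : c ≠ d)
    (hab : G.Adj a b) (hbc : G.Adj b c) (hcd : G.Adj c d) (hda : G.Adj d a)
    (hchord : G.Adj a c → G.Adj b d) : False := by
  classical
  have hNv : ∀ y, G.Adj v y ↔ (y = a ∨ y = b ∨ y = c ∨ y = d) := by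
    intro y
    rw [← SimpleGraph.mem_neighborSet, hN]
    simp
  have hva : G.Adj v a := (hNv a).2 (Or.inl rfl)
  have hvb : G.Adj v b := (hNv b).2 (Or.inr (Or.inl rfl))
  have hvc : G.Adj v c := (hNv c).2 (Or.inr (Or.inr (Or.inl rfl)))
  have hvd : G.Adj v d := (hNv d).2 (Or.inr (Or.inr (Or.inr rfl)))
  set Ghat : SimpleGraph V := G ⊔ SimpleGraph.fromEdgeSet {s(a, c)} with hGhat
  have hGle : G ≤ Ghat := le_sup_left
  have hGhatAdj : ∀ x y, Ghat.Adj x y ↔ G.Adj x y ∨ (x = a ∧ y = c) ∨ (x = c ∧ y = a) := by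
    intro x y
    rw [hGhat]
    simp only [SimpleGraph.sup_adj, SimpleGraph.fromEdgeSet_adj, Set.mem_singleton_iff,
      Sym2.eq_iff]
    constructor
    · rintro (h | ⟨(⟨rfl, rfl⟩ | ⟨rfl, rfl⟩), hne⟩)
      · exact Or.inl h
      · exact Or.inr (Or.inl ⟨rfl, rfl⟩)
      · exact Or.inr (Or.inr ⟨rfl, rfl⟩)
    · rintro (h | ⟨rfl, rfl⟩ | ⟨rfl, rfl⟩)
      · exact Or.inl h
      · exact Or.inr ⟨Or.inl ⟨rfl, rfl⟩, hac'⟩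
      · exact Or.inr ⟨Or.inr ⟨rfl, rfl⟩, hac'.symm⟩
  set Vs : Set V := ({v}ᶜ : Set V) with hVs
  set H₁ : SimpleGraph ↥Vs := Ghat.induce Vs with hH₁
  have haVs : a ∈ Vs := by simp [hVs, hva.ne']
  have hbVs : b ∈ Vs := by simp [hVs, hvb.ne']
  have hcVs : c ∈ Vs := by simp [hVs, hvc.ne']
  have hdVs : d ∈ Vs := by simp [hVs, hvd.ne']
  -- connectivity of H₁
  have hreachA : ∀ u : ↥Vs, H₁.Reachable u ⟨a, haVs⟩ := by
    intro u
    have huv : (u : V) ≠ v := by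
      exact u.2
    obtain ⟨W⟩ := hconn.preconnected u.val v
    obtain ⟨y, hvy, q, hq⟩ := exists_nbr_walk (A := Set.univ) W (by simp) huv
    have h1 : (G.induce Vs).Reachable ⟨u.val, u.2⟩ ⟨y, by simp [hVs, hvy.ne']⟩ := by
      exact reachable_induce_of_walk' G (B := Vs) q
        (fun z hz => by simp [hVs, (hq z hz).2])
    have h2 : H₁.Reachable u ⟨y, by simp [hVs, hvy.ne']⟩ := by
      have h3 := h1.mono (induce_mono_left hGle Vs)
      rw [hH₁]
      exact h3
    refine h2.trans ?_
    have hadj : ∀ {p q : V} (hp : p ∈ Vs) (hq : q ∈ Vs), Ghat.Adj p q →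
        H₁.Reachable ⟨p, hp⟩ ⟨q, hq⟩ := by
      intro p q hp hq h
      exact (induce_adj_mk hp hq h).reachable
    rcases (hNv y).1 hvy with rfl | rfl | rfl | rfl
    · exact Reachable.refl _
    · exact hadj _ _ (hGle hab.symm)
    · exact hadj _ _ ((hGhatAdj y a).2 (Or.inr (Or.inr ⟨rfl, rfl⟩)))
    · exact hadj _ _ (hGle hda)
  have hH₁conn : H₁.Connected := by
    rw [SimpleGraph.connected_iff]
    exact ⟨fun u w => (hreachA u).trans (hreachA w).symm, ⟨⟨a, haVs⟩⟩⟩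
  -- edge counts
  have hGhatNv : ∀ y, Ghat.Adj v y ↔ G.Adj v y := by
    intro y
    rw [hGhatAdj]
    constructor
    · rintro (h | ⟨rfl, rfl⟩ | ⟨rfl, rfl⟩)
      · exact h
      · exact absurd rfl hva.ne
      · exact absurd rfl hvc.ne
    · exact Or.inl
  have hcount : H₁.edgeSet.ncard + 4 = Ghat.edgeSet.ncard := by
    have hpart : Ghat.edgeSet =
        (Sym2.map (Subtype.val : ↥Vs → V)) '' H₁.edgeSet ∪ Ghat.incidenceSet v := by
      ext e
      refine Sym2.ind (fun x y => ?_) e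
      constructor
      · intro he
        rw [SimpleGraph.mem_edgeSet] at he
        by_cases hx : x = v
        · exact Or.inr ⟨by rwa [SimpleGraph.mem_edgeSet], by simp [hx]⟩
        · by_cases hy : y = v
          · exact Or.inr ⟨by rwa [SimpleGraph.mem_edgeSet], by simp [hy]⟩
          · refine Or.inl ⟨s(⟨x, hx⟩, ⟨y, hy⟩), ?_, ?_⟩
            · rw [SimpleGraph.mem_edgeSet]
              exact induce_adj_mk (B := Vs) hx hy he
            · simp
      · rintro (⟨e', he', heq⟩ | h)
        · rw [← heq]
          revert he'
          refine Sym2.ind (fun p q hpq => ?_) e'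
          rw [SimpleGraph.mem_edgeSet] at hpq
          rw [Sym2.map_pair_eq, SimpleGraph.mem_edgeSet]
          exact hpq
        · exact h.1
    have hdisj : Disjoint ((Sym2.map (Subtype.val : ↥Vs → V)) '' H₁.edgeSet)
        (Ghat.incidenceSet v) := by
      rw [Set.disjoint_left]
      rintro e ⟨e', he', rfl⟩ hinc
      have hv := hinc.2
      revert hv he'
      refine Sym2.ind (fun p q => ?_) e'
      intro _ hv
      rw [Sym2.map_pair_eq, Sym2.mem_iff] at hv
      rcases hv with h | h
      · exact p.2 h.symm
      · exact q.2 h.symm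
    rw [hpart, Set.ncard_union_eq hdisj (Set.toFinite _) (Set.toFinite _),
      Set.ncard_image_of_injective _ (Sym2.map.injective Subtype.val_injective)]
    have hincGhat : Ghat.incidenceSet v = G.incidenceSet v := by
      ext e
      refine Sym2.ind (fun x y => ?_) e
      unfold SimpleGraph.incidenceSet
      simp only [Set.mem_sep_iff, SimpleGraph.mem_edgeSet]
      rw [hGhatAdj]
      constructor
      · rintro ⟨h | ⟨rfl, rfl⟩ | ⟨rfl, rfl⟩, hm⟩
        · exact ⟨h, hm⟩
        · rw [Sym2.mem_iff] at hm
          rcases hm with rfl | rfl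
          · exact absurd rfl hva.ne
          · exact absurd rfl hvc.ne
        · rw [Sym2.mem_iff] at hm
          rcases hm with rfl | rfl
          · exact absurd rfl hvc.ne
          · exact absurd rfl hva.ne
      · exact fun ⟨h, hm⟩ => ⟨Or.inl h, hm⟩
    have hinc4 : (G.incidenceSet v).ncard = 4 := by
      rw [← Nat.card_coe_set_eq, Nat.card_congr (G.incidenceSetEquivNeighborSet v),
        Nat.card_coe_set_eq, hdeg]
    rw [hincGhat, hinc4]
  have hcount2 : Ghat.edgeSet.ncard ≤ G.edgeSet.ncard + 1 := by
    have h1 : Ghat.edgeSet ⊆ G.edgeSet ∪ {s(a, c)} := by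
      rw [hGhat, SimpleGraph.edgeSet_sup]
      apply Set.union_subset_union_right
      rw [SimpleGraph.edgeSet_fromEdgeSet]
      exact Set.diff_subset
    calc Ghat.edgeSet.ncard ≤ (G.edgeSet ∪ {s(a, c)}).ncard :=
          Set.ncard_le_ncard h1 (Set.toFinite _)
      _ ≤ G.edgeSet.ncard + ({s(a, c)} : Set (Sym2 V)).ncard := Set.ncard_union_le _ _
      _ = G.edgeSet.ncard + 1 := by rw [Set.ncard_singleton]
  -- no forest cut in H₁
  have hNoFC : ∀ S : Set ↥Vs, ¬ H₁.IsForestCut S := by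
    rintro S ⟨hcut, hfor⟩
    set St : Set V := Subtype.val '' S with hSt
    have hStVs : St ⊆ Vs := by
      rintro x ⟨y, _, rfl⟩
      exact y.2
    have hvSt : v ∉ St := fun h => (hStVs h) rfl
    -- translate forest condition to V level
    have hforV : (Ghat.induce St).IsAcyclic :=
      acyclic_iso (isoInduceInduce Ghat Vs S) hfor
    -- translate cut condition to V level
    have hsetc : Subtype.val '' (Sᶜ : Set ↥Vs) = (St ∪ {v})ᶜ := by
      ext x
      constructor
      · rintro ⟨y, hy, rfl⟩
        intro hx
        rcases hx with hx | hx
        · obtain ⟨z, hz, hze⟩ := hx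
          exact hy (by rwa [Subtype.val_injective hze] at hz)
        · exact y.2 hx
      · intro hx
        simp only [Set.mem_compl_iff, Set.mem_union, Set.mem_singleton_iff] at hx
        push_neg at hx
        refine ⟨⟨x, hx.2⟩, ?_, rfl⟩
        intro hmem
        exact hx.1 ⟨⟨x, hx.2⟩, hmem, rfl⟩
    have hcutV : ¬ (Ghat.induce ((St ∪ {v})ᶜ)).Preconnected := by
      rw [← hsetc]
      intro hpre
      exact hcut (((isoInduceInduce Ghat Vs (Sᶜ)).preconnected_iff).mpr hpre)
    set U : Set V := (St ∪ {v})ᶜ with hU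
    set K : SimpleGraph ↥U := Ghat.induce U with hK
    rw [SimpleGraph.Preconnected] at hcutV
    push_neg at hcutV
    obtain ⟨p, q, hpq⟩ := hcutV
    have hvStc : v ∈ (Stᶜ : Set V) := hvSt
    have memU : ∀ {x : V}, G.Adj v x → x ∉ St → x ∈ U := by
      intro x hx hxS
      intro hmem
      rcases hmem with h | h
      · exact hxS h
      · exact hx.ne' h
    -- the "first arrival" helper
    have hWalkToK : ∀ (x : V) (hx : x ∈ (Stᶜ : Set V)) (hxv : x ≠ v),
        (G.induce (Stᶜ : Set V)).Reachable ⟨x, hx⟩ ⟨v, hvStc⟩ →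
        ∃ (y : V) (hy : G.Adj v y) (hyS : y ∉ St),
          K.Reachable ⟨x, fun hm => hm.elim (fun h => hx h) (fun h => hxv h)⟩ ⟨y, memU hy hyS⟩ := by
      intro x hx hxv hre
      obtain ⟨Wi⟩ := hre
      -- walk up to G
      let hom : G.induce (Stᶜ : Set V) →g G := ⟨Subtype.val, fun {p q} h => by simpa using h⟩
      let W : G.Walk x v := Wi.map hom
      have hWsup : ∀ z ∈ W.support, z ∈ (Stᶜ : Set V) := by
        intro z hz
        rw [SimpleGraph.Walk.support_map] at hz
        obtain ⟨w, _, rfl⟩ := List.mem_map.mp hz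
        exact w.2
      obtain ⟨y, hvy, qk, hqk⟩ := exists_nbr_walk (A := (Stᶜ : Set V)) W hWsup hxv
      have hyS : y ∉ St := (hqk y qk.end_mem_support).1
      refine ⟨y, hvy, hyS, ?_⟩
      have hsub : ∀ z ∈ qk.support, z ∈ U := by
        intro z hz
        intro hmem
        rcases hmem with h | h
        · exact (hqk z hz).1 h
        · exact (hqk z hz).2 h
      have h1 := reachable_induce_of_walk' G (B := U) qk hsub
      exact h1.mono (induce_mono_left hGle U)
    -- Case 1 : a,b,c,d all in St : 4-cycle in the forest
    by_cases hall : a ∈ St ∧ b ∈ St ∧ c ∈ St ∧ d ∈ St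
    · obtain ⟨haS, hbS, hcS, hdS⟩ := hall
      have hne : ∀ (x y : V) (hx : x ∈ St) (hy : y ∈ St), x ≠ y →
          (⟨x, hx⟩ : ↥St) ≠ ⟨y, hy⟩ := fun x y hx hy h he => h (congrArg Subtype.val he)
      obtain ⟨w, hw⟩ := c4cycle (A := Ghat.induce St)
        (induce_adj_mk haS hbS (hGle hab)) (induce_adj_mk hbS hcS (hGle hbc))
        (induce_adj_mk hcS hdS (hGle hcd)) (induce_adj_mk hdS haS (hGle hda))
        (hne _ _ _ _ hab') (hne _ _ _ _ hac') (hne _ _ _ _ had')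
        (hne _ _ _ _ hbc') (hne _ _ _ _ hbd') (hne _ _ _ _ hcd')
      exact hforV w hw
    · -- some neighbor outside St
      have hx0 : ∃ x0, G.Adj v x0 ∧ x0 ∉ St := by
        by_contra hcon
        push_neg at hcon
        exact hall ⟨hcon a hva, hcon b hvb, hcon c hvc, hcon d hvd⟩
      by_cases hclus : ∀ (x y : V) (hx : G.Adj v x) (hy : G.Adj v y)
          (hxS : x ∉ St) (hyS : y ∉ St), K.Reachable ⟨x, memU hx hxS⟩ ⟨y, memU hy hyS⟩
      · -- clustered case: St is a forest cut of G
        obtain ⟨x0, hvx0, hx0S⟩ := hx0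
        refine hfc St ⟨?_, ?_⟩
        · intro hpre
          have hre : ∀ (r : ↥U), K.Reachable r ⟨x0, memU hvx0 hx0S⟩ := by
            intro r
            have hrv : (r : V) ≠ v := fun h => r.2 (Or.inr h)
            have hrs : (r : V) ∈ (Stᶜ : Set V) := fun h => r.2 (Or.inl h)
            obtain ⟨y, hy, hyS, hKr⟩ := hWalkToK r hrs hrv (hpre ⟨r, hrs⟩ ⟨v, hvStc⟩)
            exact hKr.trans (hclus y x0 hy hvx0 hyS hx0S)
          exact hpq ((hre p).trans (hre q).symm)
        · exact acyclic_of_le (induce_mono_left hGle St) hforV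
      · -- unclustered case
        push_neg at hclus
        obtain ⟨x, y, hvx, hvy, hxS, hyS, hnRxy⟩ := hclus
        have hKadj : ∀ {p' q' : V} (hp' : p' ∈ U) (hq' : q' ∈ U), Ghat.Adj p' q' →
            K.Reachable ⟨p', hp'⟩ ⟨q', hq'⟩ := by
          intro p' q' hp' hq' h
          exact (induce_adj_mk hp' hq' h).reachable
        have main : ∀ (hbS : b ∉ St) (hdS : d ∉ St),
            ¬ K.Reachable ⟨b, memU hvb hbS⟩ ⟨d, memU hvd hdS⟩ → False := by
          intro hbS hdS hnR
          have hGbd : ¬ G.Adj b d := fun h => hnR (hKadj _ _ (hGle h))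
          have hGac : ¬ G.Adj a c := fun h => hGbd (hchord h)
          have haS : a ∈ St := by
            by_contra haS
            exact hnR ((hKadj (memU hvb hbS) (memU hva haS) (hGle hab.symm)).trans
              (hKadj (memU hva haS) (memU hvd hdS) (hGle hda.symm)))
          have hcS : c ∈ St := by
            by_contra hcS
            exact hnR ((hKadj (memU hvb hbS) (memU hvc hcS) (hGle hbc)).trans
              (hKadj (memU hvc hcS) (memU hvd hdS) (hGle hcd)))
          refine hfc (St ∪ {v}) ⟨?_, ?_⟩
          · intro hpre
            exact hnR (Reachable.mono (induce_mono_left hGle U)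
              (hpre ⟨b, memU hvb hbS⟩ ⟨d, memU hvd hdS⟩))
          · -- acyclicity of G.induce (St ∪ {v})
            have hforG_St : (G.induce St).IsAcyclic :=
              acyclic_of_le (induce_mono_left hGle St) hforV
            have hnrac : ¬ (G.induce St).Reachable ⟨a, haS⟩ ⟨c, hcS⟩ := by
              rintro ⟨w⟩
              let w' : (Ghat.induce St).Walk ⟨a, haS⟩ ⟨c, hcS⟩ :=
                w.map (SimpleGraph.Hom.ofLE (induce_mono_left hGle St))
              have hedge : s(⟨c, hcS⟩, ⟨a, haS⟩) ∉
                  (w'.toPath : (Ghat.induce St).Walk ⟨a, haS⟩ ⟨c, hcS⟩).edges := by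
                intro hmem
                have h1 := SimpleGraph.Walk.edges_toPath_subset w' hmem
                have hedgeeq : w'.edges = w.edges := by
                  show (w.map (SimpleGraph.Hom.ofLE
                    (induce_mono_left hGle St))).edges = w.edges
                  rw [SimpleGraph.Walk.edges_map]
                  have hid : (Sym2.map (⇑(SimpleGraph.Hom.ofLE
                      (induce_mono_left hGle St)))) = id := by
                    funext e
                    refine Sym2.ind (fun x y => ?_) e
                    simp [SimpleGraph.Hom.ofLE_apply]
                  rw [hid, List.map_id]
                rw [hedgeeq] at h1
                have h3 := SimpleGraph.Walk.adj_of_mem_edges w h1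
                have h4 : G.Adj c a := by simpa using h3
                exact hGac h4.symm
              have hadjca : (Ghat.induce St).Adj ⟨c, hcS⟩ ⟨a, haS⟩ :=
                induce_adj_mk _ _ ((hGhatAdj c a).2 (Or.inr (Or.inr ⟨rfl, rfl⟩)))
              exact hforV _ (SimpleGraph.Path.cons_isCycle w'.toPath hadjca hedge)
            intro u c0 hc0
            by_cases hsupp : ∀ w ∈ c0.support, (w : V) ∈ St
            · obtain ⟨s', q', hq'⟩ := isCycle_restrict c0 hc0 hsupp
              exact hforG_St q' hq'
            · push_neg at hsupp
              obtain ⟨w0, hw0mem, hw0⟩ := hsupp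
              have hvmemT : v ∈ St ∪ {v} := Or.inr rfl
              have hw0v : w0 = ⟨v, hvmemT⟩ := by
                apply Subtype.ext
                rcases w0.2 with h | h
                · exact absurd h hw0
                · exact h
              rw [hw0v] at hw0mem
              have hc1 : (c0.rotate _ hw0mem).IsCycle := hc0.rotate hw0mem
              set c1 := c0.rotate _ hw0mem with hc1def
              obtain ⟨w1, h1, pp, hp_eq⟩ := SimpleGraph.Walk.not_nil_iff.mp hc1.not_nil
              have hc1' := hc1
              rw [hp_eq, SimpleGraph.Walk.cons_isCycle_iff] at hc1'
              obtain ⟨hpPath, hedge1⟩ := hc1'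
              have hlen3 : 3 ≤ c1.length := hc1.three_le_length
              rw [hp_eq, SimpleGraph.Walk.length_cons] at hlen3
              have hpr : pp.reverse.IsPath := hpPath.reverse
              have hprnn : ¬ pp.reverse.Nil := by
                rw [SimpleGraph.Walk.not_nil_iff_lt_length, SimpleGraph.Walk.length_reverse]
                omega
              obtain ⟨w2, h2, qq, hq_eq⟩ := SimpleGraph.Walk.not_nil_iff.mp hprnn
              have hqprop : qq.IsPath ∧ (⟨v, hvmemT⟩ : ↥(St ∪ {v})) ∉ qq.support := by
                rw [hq_eq, SimpleGraph.Walk.cons_isPath_iff] at hpr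
                exact hpr
              have hGw1 : G.Adj v (w1 : V) := by simpa using h1
              have hGw2 : G.Adj v (w2 : V) := by simpa using h2
              have hw1St : (w1 : V) ∈ St := by
                rcases w1.2 with h | h
                · exact h
                · exact absurd h hGw1.ne'
              have hw2St : (w2 : V) ∈ St := by
                rcases w2.2 with h | h
                · exact h
                · exact absurd h hGw2.ne'
              have hw1ac : (w1 : V) = a ∨ (w1 : V) = c := by
                rcases (hNv _).1 hGw1 with h | h | h | h
                · exact Or.inl h
                · exact absurd (h ▸ hw1St) hbS
                · exact Or.inr h
                · exact absurd (h ▸ hw1St) hdS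
              have hw2ac : (w2 : V) = a ∨ (w2 : V) = c := by
                rcases (hNv _).1 hGw2 with h | h | h | h
                · exact Or.inl h
                · exact absurd (h ▸ hw2St) hbS
                · exact Or.inr h
                · exact absurd (h ▸ hw2St) hdS
              have hw12 : w1 ≠ w2 := by
                intro he
                have hmem : s(⟨v, hvmemT⟩, w2) ∈ pp.edges := by
                  have h5 : s(⟨v, hvmemT⟩, w2) ∈ pp.reverse.edges := by
                    rw [hq_eq, SimpleGraph.Walk.edges_cons]
                    exact List.mem_cons_self
                  rw [SimpleGraph.Walk.edges_reverse] at h5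
                  exact List.mem_reverse.mp h5
                rw [← he] at hmem
                exact hedge1 hmem
              have hw12v : (w1 : V) ≠ (w2 : V) := fun h => hw12 (Subtype.ext h)
              have hsupq : ∀ z ∈ qq.support, (z : V) ∈ St := by
                intro z hz
                rcases z.2 with h | h
                · exact h
                · exfalso
                  apply hqprop.2
                  have hzv : z = ⟨v, hvmemT⟩ := Subtype.ext h
                  rwa [hzv] at hz
              have hreq := reachable_restrict qq hsupq
              rcases hw2ac with h2a | h2c <;> rcases hw1ac with h1a | h1c
              · exact hw12v (by rw [h1a, h2a])
              · apply hnrac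
                have e2 : (⟨(w2 : V), hsupq w2 qq.start_mem_support⟩ : ↥St) = ⟨a, haS⟩ :=
                  Subtype.ext h2a
                have e1 : (⟨(w1 : V), hsupq w1 qq.end_mem_support⟩ : ↥St) = ⟨c, hcS⟩ :=
                  Subtype.ext h1c
                rw [e2, e1] at hreq
                exact hreq
              · apply hnrac
                have e2 : (⟨(w2 : V), hsupq w2 qq.start_mem_support⟩ : ↥St) = ⟨c, hcS⟩ :=
                  Subtype.ext h2c
                have e1 : (⟨(w1 : V), hsupq w1 qq.end_mem_support⟩ : ↥St) = ⟨a, haS⟩ :=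
                  Subtype.ext h1a
                rw [e2, e1] at hreq
                exact hreq.symm
              · exact hw12v (by rw [h1c, h2c])
        rcases (hNv x).1 hvx with rfl | rfl | rfl | rfl <;>
          rcases (hNv y).1 hvy with rfl | rfl | rfl | rfl
        · exact hnRxy (Reachable.refl _)
        · exact hnRxy (hKadj _ _ (hGle hab))
        · exact hnRxy (hKadj _ _ ((hGhatAdj _ _).2 (Or.inr (Or.inl ⟨rfl, rfl⟩))))
        · exact hnRxy (hKadj _ _ (hGle hda.symm))
        · exact hnRxy (hKadj _ _ (hGle hab.symm))
        · exact hnRxy (Reachable.refl _)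
        · exact hnRxy (hKadj _ _ (hGle hbc))
        · exact main hxS hyS hnRxy
        · exact hnRxy (hKadj _ _ ((hGhatAdj _ _).2 (Or.inr (Or.inr ⟨rfl, rfl⟩))))
        · exact hnRxy (hKadj _ _ (hGle hbc.symm))
        · exact hnRxy (Reachable.refl _)
        · exact hnRxy (hKadj _ _ (hGle hcd))
        · exact hnRxy (hKadj _ _ (hGle hda))
        · exact main hyS hxS (fun h => hnRxy h.symm)
        · exact hnRxy (hKadj _ _ (hGle hcd.symm))
        · exact hnRxy (Reachable.refl _)
  -- transfer to Fin m and conclude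
  have hn1 : 1 ≤ Fintype.card V := by
    have : Nonempty V := ⟨v⟩
    exact Fintype.card_pos
  have hcardVs : Fintype.card ↥Vs = Fintype.card V - 1 := by
    have h1 : Fintype.card ↥Vs = Fintype.card {x : V // ¬ x = v} := by
      apply Fintype.card_congr
      exact Equiv.subtypeEquivRight (fun x => Iff.rfl)
    rw [h1, Fintype.card_subtype_compl, Fintype.card_subtype_eq]
  set m : ℕ := Fintype.card V - 1 with hm
  have hmlt : m < Fintype.card V := by omega
  let e : ↥Vs ≃ Fin m := Fintype.equivFinOfCardEq hcardVs
  let Hm : SimpleGraph (Fin m) := {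
    Adj := fun i j => H₁.Adj (e.symm i) (e.symm j)
    symm := ⟨fun i j (h : H₁.Adj (e.symm i) (e.symm j)) => h.symm⟩
    loopless := ⟨fun i h => H₁.loopless.irrefl _ h⟩ }
  have hIso : H₁ ≃g Hm := by
    refine ⟨e, ?_⟩
    intro x y
    show H₁.Adj (e.symm (e x)) (e.symm (e y)) ↔ H₁.Adj x y
    rw [Equiv.symm_apply_apply, Equiv.symm_apply_apply]
  have hHmconn : Hm.Connected := hIso.connected_iff.mp hH₁conn
  have hHmfc : ∀ S : Set (Fin m), ¬ Hm.IsForestCut S := forestcut_transfer hIso hNoFC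
  have hHmcard : Hm.edgeSet.ncard = H₁.edgeSet.ncard := by
    rw [← Nat.card_coe_set_eq, ← Nat.card_coe_set_eq]
    exact Nat.card_congr hIso.mapEdgeSet.symm
  have hbound := hmin m hmlt Hm hHmconn hHmfc
  rw [hHmcard] at hbound
  -- arithmetic
  have hcast : (m : ℝ) = (Fintype.card V : ℝ) - 1 := by
    rw [hm, Nat.cast_sub hn1, Nat.cast_one]
  rw [hcast] at hbound
  have hEN : (H₁.edgeSet.ncard : ℝ) + 3 ≤ (G.edgeSet.ncard : ℝ) := by
    have : H₁.edgeSet.ncard + 3 ≤ G.edgeSet.ncard := by omega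
    exact_mod_cast this
  nlinarith [hbound, hsmall, hEN]

end FCAux

/-- In a minimum counterexample to the α-FC Conjecture, no degree-4 vertex has a
4-cycle in its neighborhood. -/
theorem stmt_4 {V : Type*} [Fintype V] (α : ℝ) (hα2 : 2 ≤ α) (hα3 : α ≤ 3)
    (G : SimpleGraph V) (hconn : G.Connected)
    (hfc : ∀ S : Set V, ¬ G.IsForestCut S)
    (hsmall : (G.edgeSet.ncard : ℝ) < α * ((Fintype.card V : ℝ) - 3) + 3)
    (hmin : ∀ m : ℕ, m < Fintype.card V → ∀ H : SimpleGraph (Fin m),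
      H.Connected → (∀ S : Set (Fin m), ¬ H.IsForestCut S) →
      α * ((m : ℝ) - 3) + 3 ≤ (H.edgeSet.ncard : ℝ)) :
    ∀ v : V, (G.neighborSet v).ncard = 4 →
      ¬ ∃ a b c d : V, a ∈ G.neighborSet v ∧ b ∈ G.neighborSet v ∧
        c ∈ G.neighborSet v ∧ d ∈ G.neighborSet v ∧
        a ≠ b ∧ a ≠ c ∧ a ≠ d ∧ b ≠ c ∧ b ≠ d ∧ c ≠ d ∧
        G.Adj a b ∧ G.Adj b c ∧ G.Adj c d ∧ G.Adj d a := by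
  intro v hdeg
  rintro ⟨a, b, c, d, ha, hb, hc, hd, hab', hac', had', hbc', hbd', hcd',
    hab, hbc, hcd, hda⟩
  have hsub : ({a, b, c, d} : Set V) ⊆ G.neighborSet v := by
    intro x hx
    rcases hx with rfl | rfl | rfl | rfl
    · exact ha
    · exact hb
    · exact hc
    · exact hd
  have hcard : ({a, b, c, d} : Set V).ncard = 4 := by
    rw [Set.ncard_insert_of_notMem (by simp [hab', hac', had']) (Set.toFinite _),
      Set.ncard_insert_of_notMem (by simp [hbc', hbd']) (Set.toFinite _),
      Set.ncard_insert_of_notMem (by simp [hcd']) (Set.toFinite _),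
      Set.ncard_singleton]
  have hN : G.neighborSet v = {a, b, c, d} :=
    (Set.eq_of_subset_of_ncard_le hsub (by rw [hdeg, hcard]) (Set.toFinite _)).symm
  by_cases hac : G.Adj a c
  · by_cases hbd : G.Adj b d
    · exact FCAux.key α hα3 G hconn hfc hsmall hmin v a b c d hdeg hN
        hab' hac' had' hbc' hbd' hcd' hab hbc hcd hda (fun _ => hbd)
    · have hN' : G.neighborSet v = {b, c, d, a} := by
        rw [hN]
        ext x
        simp only [Set.mem_insert_iff, Set.mem_singleton_iff]
        tauto
      exact FCAux.key α hα3 G hconn hfc hsmall hmin v b c d a hdeg hN'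
        hbc' hbd' (Ne.symm hab') hcd' (Ne.symm hac') (Ne.symm had')
        hbc hcd hda hab (fun h => absurd h hbd)
  · exact FCAux.key α hα3 G hconn hfc hsmall hmin v a b c d hdeg hN
      hab' hac' had' hbc' hbd' hcd' hab hbc hcd hda (fun h => absurd h hac)
end

section
/- If G is a 3-connected 1-cyclic simple graph on n ≥ 5 vertices, then no two vertices of degree 3 in G are adjacent. -/
private lemma walk_mem {W : Type*} {H : SimpleGraph W} {C : Set W}
    (hC : ∀ ⦃x y : W⦄, x ∈ C → H.Adj x y → y ∈ C) :
    ∀ {x y : W}, H.Walk x y → x ∈ C → y ∈ C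
  | _, _, SimpleGraph.Walk.nil, hx => hx
  | _, _, SimpleGraph.Walk.cons h p, hx => walk_mem hC p (hC hx h)

private lemma adj_of_not_acyclic {W : Type*} [Fintype W] {H : SimpleGraph W}
    (hcard : Fintype.card W ≤ 3) (h : ¬ H.IsAcyclic) :
    ∀ x y : W, x ≠ y → H.Adj x y := by
  classical
  simp only [SimpleGraph.IsAcyclic, not_forall, not_not] at h
  obtain ⟨a, c, hc⟩ := h
  have h3 := hc.three_le_length
  have hnd := hc.support_nodup
  have hle : c.length ≤ 3 := by
    have h1 := List.Nodup.length_le_card hnd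
    have h2 : c.support.tail.length = c.length := by
      simp [SimpleGraph.Walk.length_support]
    omega
  have hlen : c.length = 3 := le_antisymm hle h3
  cases c with
  | nil => simp at hlen
  | cons h1 p =>
    cases p with
    | nil => simp at hlen
    | cons h2 q =>
      cases q with
      | nil => simp at hlen
      | cons h3' r =>
        cases r with
        | cons h4 s => simp [SimpleGraph.Walk.length_cons] at hlen
        | nil =>
          rename_i b d
          simp [SimpleGraph.Walk.support_cons] at hnd
          obtain ⟨⟨hbd, hba⟩, hda⟩ := hnd
          have huniv : ∀ z : W, z = b ∨ z = d ∨ z = a := by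
            intro z
            by_contra hz
            push_neg at hz
            obtain ⟨hz1, hz2, hz3⟩ := hz
            have hc4 : ({z, b, d, a} : Finset W).card = 4 := by
              rw [Finset.card_insert_of_notMem (by simp [hz1, hz2, hz3]),
                  Finset.card_insert_of_notMem (by simp [hbd, hba]),
                  Finset.card_insert_of_notMem (by simp [hda])]
              simp
            have hcu := Finset.card_le_univ ({z, b, d, a} : Finset W)
            rw [hc4] at hcu
            omega
          intro x y hxy
          rcases huniv x with rfl | rfl | rfl <;>
            rcases huniv y with rfl | rfl | rfl <;>
            first
              | exact absurd rfl hxy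
              | assumption
              | exact h1.symm
              | exact h2.symm
              | exact h3'.symm
              | exact h1
              | exact h2
              | exact h3'

private lemma adj_of_set {V : Type*} [Fintype V] {G : SimpleGraph V} {S : Set V}
    (hS : S.ncard ≤ 3) (h : ¬ (G.induce S).IsAcyclic) :
    ∀ x y : V, x ∈ S → y ∈ S → x ≠ y → G.Adj x y := by
  classical
  haveI : Fintype S := S.toFinite.fintype
  have hcard : Fintype.card S ≤ 3 := by
    rw [← Nat.card_eq_fintype_card, Nat.card_coe_set_eq]
    exact hS
  intro x y hx hy hxy
  have := adj_of_not_acyclic hcard h ⟨x, hx⟩ ⟨y, hy⟩ (by simpa using hxy)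
  simpa using this

/-- In a 3-connected 1-cyclic graph on `n ≥ 5` vertices, no two degree-3 vertices
are adjacent. -/
theorem stmt_9 {V : Type*} [Fintype V] (G : SimpleGraph V)
    (h3 : G.KConnected 3) (h1 : G.KCyclic 1) (hn : 5 ≤ Fintype.card V) :
    ∀ u v : V, G.Adj u v →
      ¬ ((G.neighborSet u).ncard = 3 ∧ (G.neighborSet v).ncard = 3) := by
  classical
  rintro u v huv ⟨hdu, hdv⟩
  have hN : G.setNbhd {u} = G.neighborSet u := by
    ext x
    simp only [SimpleGraph.setNbhd, Set.mem_setOf_eq, Set.mem_singleton_iff,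
      SimpleGraph.mem_neighborSet, exists_eq_left]
    exact ⟨fun h => h.2, fun h => ⟨h.ne', h⟩⟩
  rcases h1 {u} ⟨u, rfl⟩ (by simp) with hdom | hac
  · rw [hN] at hdom
    have hu1 : ({u} : Set V).ncard = 1 := Set.ncard_singleton u
    have hle := Set.ncard_union_le ({u} : Set V) (G.neighborSet u)
    rw [hdom, Set.ncard_univ, Nat.card_eq_fintype_card, hu1, hdu] at hle
    omega
  · rw [hN] at hac
    have htri := adj_of_set (le_of_eq hdu) hac
    have hv : v ∈ G.neighborSet u := huv
    have hdiff : (G.neighborSet u \ {v}).ncard = 2 := by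
      rw [Set.ncard_diff_singleton_of_mem hv, hdu]
    obtain ⟨a, b, hab, hEq⟩ := Set.ncard_eq_two.mp hdiff
    have ha : a ∈ G.neighborSet u ∧ a ≠ v := by
      have : a ∈ G.neighborSet u \ {v} := by rw [hEq]; simp
      exact ⟨this.1, this.2⟩
    have hb : b ∈ G.neighborSet u ∧ b ≠ v := by
      have : b ∈ G.neighborSet u \ {v} := by rw [hEq]; simp
      exact ⟨this.1, this.2⟩
    have hNu : G.neighborSet u = {v, a, b} := by
      rw [show ({v, a, b} : Set V) = insert v {a, b} from rfl, ← hEq,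
        Set.insert_diff_singleton, Set.insert_eq_self.2 hv]
    have hva : G.Adj v a := htri v a hv ha.1 (fun h => ha.2 h.symm)
    have hvb : G.Adj v b := htri v b hv hb.1 (fun h => hb.2 h.symm)
    have hua : u ≠ a := (ha.1 : G.Adj u a).ne
    have hub : u ≠ b := (hb.1 : G.Adj u b).ne
    have hsub : ({u, a, b} : Set V) ⊆ G.neighborSet v := by
      rintro x (rfl | rfl | rfl)
      · exact huv.symm
      · exact hva
      · exact hvb
    have hcard3 : ({u, a, b} : Set V).ncard = 3 := by
      rw [Set.ncard_insert_of_notMem (by simp [hua, hub]),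
        Set.ncard_insert_of_notMem (by simp [hab]), Set.ncard_singleton]
    have hNv : G.neighborSet v = {u, a, b} :=
      (Set.eq_of_subset_of_ncard_le hsub (by rw [hdv, hcard3]) (Set.toFinite _)).symm
    -- find a fifth vertex w
    have hfour : ({u, v, a, b} : Set V).ncard ≤ 4 := by
      have i1 := Set.ncard_insert_le u ({v, a, b} : Set V)
      have i2 := Set.ncard_insert_le v ({a, b} : Set V)
      have i3 := Set.ncard_insert_le a ({b} : Set V)
      have i4 : ({b} : Set V).ncard = 1 := Set.ncard_singleton b
      omega
    have hne : ({u, v, a, b} : Set V) ≠ Set.univ := by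
      intro h
      rw [h, Set.ncard_univ, Nat.card_eq_fintype_card] at hfour
      omega
    obtain ⟨w, hw⟩ := Set.ne_univ_iff_exists_notMem _ |>.1 hne
    simp only [Set.mem_insert_iff, Set.mem_singleton_iff, not_or] at hw
    obtain ⟨hwu, hwv, hwa, hwb⟩ := hw
    -- remove {a, b}
    have hX : ({a, b} : Set V).ncard < 3 := by
      have := Set.ncard_insert_le a ({b} : Set V)
      have := Set.ncard_singleton b
      omega
    have hconn := (h3.2 {a, b} hX).preconnected
    have hu' : u ∈ ({a, b} : Set V)ᶜ := by simp [hua, hub]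
    have hv' : v ∈ ({a, b} : Set V)ᶜ := by
      simp only [Set.mem_compl_iff, Set.mem_insert_iff, Set.mem_singleton_iff, not_or]
      exact ⟨fun h => ha.2 h.symm, fun h => hb.2 h.symm⟩
    have hw' : w ∈ ({a, b} : Set V)ᶜ := by simp [hwa, hwb]
    have hreach := hconn ⟨u, hu'⟩ ⟨w, hw'⟩
    set C : Set (({a, b} : Set V)ᶜ : Set V) := {z | (z : V) = u ∨ (z : V) = v} with hC
    have hclosed : ∀ ⦃x y : (({a, b} : Set V)ᶜ : Set V)⦄,
        x ∈ C → (G.induce (({a, b} : Set V)ᶜ : Set V)).Adj x y → y ∈ C := by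
      rintro x y (hx | hx) hadj
      · have hadj' : G.Adj u (y : V) := by
          have : G.Adj (x : V) (y : V) := hadj
          rwa [hx] at this
        have hy : (y : V) ∈ G.neighborSet u := hadj'
        rw [hNu] at hy
        have hy2 := y.2
        simp only [Set.mem_compl_iff, Set.mem_insert_iff, Set.mem_singleton_iff,
          not_or] at hy2
        rcases hy with h | h | h
        · exact Or.inr h
        · exact absurd h hy2.1
        · exact absurd h hy2.2
      · have hadj' : G.Adj v (y : V) := by
          have : G.Adj (x : V) (y : V) := hadj
          rwa [hx] at this
        have hy : (y : V) ∈ G.neighborSet v := hadj'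
        rw [hNv] at hy
        have hy2 := y.2
        simp only [Set.mem_compl_iff, Set.mem_insert_iff, Set.mem_singleton_iff,
          not_or] at hy2
        rcases hy with h | h | h
        · exact Or.inl h
        · exact absurd h hy2.1
        · exact absurd h hy2.2
    obtain ⟨p⟩ := hreach
    have hwC := walk_mem hclosed p (Or.inl rfl)
    rcases hwC with h | h
    · exact hwu h
    · exact hwv h
end

section
/- If G is a 3-connected 1-cyclic simple graph on n ≥ 5 vertices, then either G is isomorphic to K^△_{n−3}, or every vertex of G has at least three neighbors of degree at least 4. -/
/-- `KTri s` is the graph obtained from a triangle by adding `s` new vertices,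
each adjacent to the three triangle vertices (and to nothing else). -/
def KTri (s : ℕ) : SimpleGraph (Fin 3 ⊕ Fin s) :=
  SimpleGraph.fromRel (fun a b => a.isLeft ∨ b.isLeft)

/-!
By 3-connectivity every vertex has degree at least 3, and 1-cyclicity (with `n ≥ 5`) forces the
neighborhood of a degree-3 vertex to be a triangle. Two adjacent degree-3 vertices would then
have the same closed neighborhood and be cut off from the rest by its two other vertices, so
every neighbor of a degree-3 vertex has degree at least 4.

Now let `v` have at most two neighbors of degree at least 4. Any other neighbor `y` of `v` has
degree 3, and its two neighbors besides `v` are adjacent to `v` and of degree at least 4; hence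
they are the same two vertices `p, q` for every such `y`, and `N(y) = {v, p, q}`. Then `{p, q}`
separates `v` and these neighbors from all other vertices, so there are none, and `G` is
`K^△_{n-3}` on the triangle `{v, p, q}`.
-/

open Set

lemma Set.card_le_ncard_of_univ_subset {V : Type*} [Fintype V] {S : Set V} (h : univ ⊆ S) :
    Fintype.card V ≤ S.ncard := by
  rw [← Nat.card_eq_fintype_card, ← ncard_univ]
  exact ncard_le_ncard h

namespace SimpleGraph

variable {V : Type*} {G : SimpleGraph V}

lemma setNbhd_singleton_s10 (x : V) : G.setNbhd {x} = G.neighborSet x := by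
  ext y
  simp only [setNbhd, mem_ofPred_eq, mem_singleton_iff, exists_eq_left, mem_neighborSet]
  exact ⟨And.right, fun h => ⟨h.ne.symm, h⟩⟩

lemma exists_adj_ne_ne_of_not_isAcyclic (h : ¬ G.IsAcyclic) (w : V) :
    ∃ a b, G.Adj a b ∧ a ≠ w ∧ b ≠ w := by
  by_contra! hstar
  refine h ((isAcyclic_starGraph w).anti fun a b hab => ?_)
  rw [starGraph_adj]
  by_cases ha : a = w
  · exact ⟨hab.ne, .inl ha⟩
  · exact ⟨hab.ne, .inr (hstar a b hab ha)⟩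

lemma isClique_of_ncard_eq_three_of_not_isAcyclic {S : Set V} (hS : S.ncard = 3)
    (h : ¬ (G.induce S).IsAcyclic) : G.IsClique S := by
  intro a ha b hb hab
  obtain ⟨c, hc⟩ : ∃ c, S \ {a, b} = {c} := by
    rw [← ncard_eq_one, ncard_sdiff (by simp [insert_subset_iff, ha, hb]), hS, ncard_pair hab]
  have hcS : c ∈ S := (hc ▸ mem_singleton c : c ∈ S \ {a, b}).1
  have hother : ∀ γ : S, γ ≠ ⟨c, hcS⟩ → (γ : V) = a ∨ (γ : V) = b := by
    intro γ hγ
    by_contra! hne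
    have : (γ : V) ∈ S \ {a, b} := ⟨γ.2, by simp [hne.1, hne.2]⟩
    exact hγ (Subtype.ext (by simpa [hc] using this))
  obtain ⟨α, β, hαβ, hα, hβ⟩ := exists_adj_ne_ne_of_not_isAcyclic h ⟨c, hcS⟩
  have hadj : G.Adj α β := hαβ
  rcases hother α hα with hα | hα <;> rcases hother β hβ with hβ | hβ <;>
    rw [hα, hβ] at hadj
  · exact (G.irrefl hadj).elim
  · exact hadj
  · exact hadj.symm
  · exact (G.irrefl hadj).elim

section Finite

variable [Fintype V]

lemma KConnected.union_setNbhd_eq_univ {k : ℕ} (hG : G.KConnected k) {D : Set V}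
    (hD : D.Nonempty) (hN : (G.setNbhd D).ncard < k) : D ∪ G.setNbhd D = univ := by
  by_contra hne
  obtain ⟨z, hz⟩ := (ne_univ_iff_exists_notMem _).mp hne
  obtain ⟨u, hu⟩ := hD
  have huX : u ∉ G.setNbhd D := fun h => h.1 hu
  have hzX : z ∉ G.setNbhd D := fun h => hz (.inr h)
  obtain ⟨p⟩ := hG.2 _ hN ⟨u, huX⟩ ⟨z, hzX⟩
  obtain ⟨d, -, hd₁, hd₂⟩ :=
    p.exists_boundary_dart {w | (w : V) ∈ D} hu (fun h => hz (.inl h))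
  exact d.snd.2 ⟨hd₂, _, hd₁, d.adj⟩

lemma KConnected.le_ncard_neighborSet {k : ℕ} (hG : G.KConnected k) (u : V) :
    k ≤ (G.neighborSet u).ncard := by
  by_contra! hlt
  have huniv := hG.union_setNbhd_eq_univ (singleton_nonempty u) (by rwa [setNbhd_singleton_s10])
  rw [setNbhd_singleton_s10] at huniv
  have hcard := (Set.card_le_ncard_of_univ_subset huniv.ge).trans (ncard_union_le _ _)
  rw [ncard_singleton] at hcard
  have := hG.1
  omega

lemma KCyclic.isClique_neighborSet (h1 : G.KCyclic 1) (hn : 5 ≤ Fintype.card V) {x : V}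
    (hx : (G.neighborSet x).ncard = 3) : G.IsClique (G.neighborSet x) := by
  refine isClique_of_ncard_eq_three_of_not_isAcyclic hx ?_
  rw [← setNbhd_singleton_s10]
  refine (h1 {x} (singleton_nonempty x) (ncard_singleton x).le).resolve_left fun huniv => ?_
  rw [setNbhd_singleton_s10] at huniv
  have := (Set.card_le_ncard_of_univ_subset huniv.ge).trans (ncard_union_le _ _)
  rw [ncard_singleton, hx] at this
  omega

-- `N(x) \ {p}` separates `{x, p}` from every vertex outside the closed neighborhood of `x`.
lemma KConnected.card_le_of_neighborSet_subset {k : ℕ} (hG : G.KConnected k) {x p : V}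
    (hxp : G.Adj x p) (hx : (G.neighborSet x).ncard ≤ k)
    (hp : G.neighborSet p ⊆ insert x (G.neighborSet x)) :
    Fintype.card V ≤ (G.neighborSet x).ncard + 1 := by
  have hN : G.setNbhd {x, p} ⊆ G.neighborSet x \ {p} := by
    rintro w ⟨hw, a, ha, haw⟩
    simp only [mem_insert_iff, mem_singleton_iff, not_or] at hw
    rcases ha with rfl | rfl
    · exact ⟨haw, hw.2⟩
    · exact ⟨(hp haw).resolve_left hw.1, hw.2⟩
  have hcard : (G.neighborSet x \ {p}).ncard < k :=
    (ncard_sdiff_singleton_lt_of_mem (s := G.neighborSet x) hxp).trans_le hx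
  have huniv :=
    hG.union_setNbhd_eq_univ (insert_nonempty x {p}) ((ncard_le_ncard hN).trans_lt hcard)
  have hcover : univ ⊆ insert x (G.neighborSet x) := by
    rw [← huniv]
    rintro w ((rfl | rfl) | hw)
    exacts [mem_insert _ _, .inr hxp, .inr (hN hw).1]
  exact (Set.card_le_ncard_of_univ_subset hcover).trans (ncard_insert_le _ _)

lemma four_le_ncard_neighborSet_of_adj (h3 : G.KConnected 3) (h1 : G.KCyclic 1)
    (hn : 5 ≤ Fintype.card V) {x p : V} (hx : (G.neighborSet x).ncard = 3) (hxp : G.Adj x p) :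
    4 ≤ (G.neighborSet p).ncard := by
  by_contra! hlt
  have hclique := h1.isClique_neighborSet hn hx
  have hsub : insert x (G.neighborSet x \ {p}) ⊆ G.neighborSet p := by
    rintro y (rfl | ⟨hy, hyp⟩)
    · exact hxp.symm
    · exact hclique hxp hy (Ne.symm hyp)
  have hNp : insert x (G.neighborSet x \ {p}) = G.neighborSet p := by
    refine eq_of_subset_of_ncard_le hsub ?_
    rw [ncard_insert_of_notMem (fun h => G.irrefl h.1),
      ncard_sdiff_singleton_of_mem (s := G.neighborSet x) hxp, hx]
    have := h3.le_ncard_neighborSet p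
    omega
  have := h3.card_le_of_neighborSet_subset hxp hx.le
    (hNp ▸ insert_subset_insert sdiff_subset)
  omega

def highDegreeNeighbors (G : SimpleGraph V) (v : V) : Set V :=
  {u | u ∈ G.neighborSet v ∧ 4 ≤ (G.neighborSet u).ncard}

lemma ncard_neighborSet_eq_three_of_mem_sdiff (h3 : G.KConnected 3) {v y : V}
    (hy : y ∈ G.neighborSet v \ G.highDegreeNeighbors v) : (G.neighborSet y).ncard = 3 := by
  have := h3.le_ncard_neighborSet y
  have : ¬ 4 ≤ (G.neighborSet y).ncard := fun h => hy.2 ⟨hy.1, h⟩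
  omega

lemma neighborSet_eq_insert_highDegreeNeighbors (h3 : G.KConnected 3) (h1 : G.KCyclic 1)
    (hn : 5 ≤ Fintype.card V) {v y : V} (hB : (G.highDegreeNeighbors v).ncard ≤ 2)
    (hy : y ∈ G.neighborSet v \ G.highDegreeNeighbors v) :
    G.neighborSet y = insert v (G.highDegreeNeighbors v) := by
  have hy3 := ncard_neighborSet_eq_three_of_mem_sdiff h3 hy
  have hclique := h1.isClique_neighborSet hn hy3
  have hvy : v ∈ G.neighborSet y := hy.1.symm
  have hsub : G.neighborSet y \ {v} ⊆ G.highDegreeNeighbors v := fun u ⟨hu, huv⟩ =>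
    ⟨hclique hvy hu (Ne.symm huv), four_le_ncard_neighborSet_of_adj h3 h1 hn hy3 hu⟩
  have heq := eq_of_subset_of_ncard_le hsub
    (by rw [ncard_sdiff_singleton_of_mem hvy, hy3]; omega)
  rw [← heq, insert_sdiff_singleton, insert_eq_of_mem hvy]

lemma neighborSet_eq_insert_of_notMem (h3 : G.KConnected 3) (h1 : G.KCyclic 1)
    (hn : 5 ≤ Fintype.card V) {v u : V} (hB : (G.highDegreeNeighbors v).ncard ≤ 2)
    (hu : u ∉ insert v (G.highDegreeNeighbors v)) :
    G.neighborSet u = insert v (G.highDegreeNeighbors v) := by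
  set B := G.highDegreeNeighbors v
  have hN : G.setNbhd (insert v (G.neighborSet v \ B)) ⊆ B := by
    rintro w ⟨hw, a, ha, haw⟩
    rw [mem_insert_iff, not_or] at hw
    rcases ha with rfl | ha
    · exact by_contra fun hwB => hw.2 ⟨haw, hwB⟩
    · have haw : w ∈ G.neighborSet a := haw
      rw [neighborSet_eq_insert_highDegreeNeighbors h3 h1 hn hB ha] at haw
      exact haw.resolve_left hw.1
  have huniv := h3.union_setNbhd_eq_univ (insert_nonempty _ _)
    ((ncard_le_ncard hN).trans_lt (by omega))
  rw [mem_insert_iff, not_or] at hu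
  rcases huniv.ge (mem_univ u) with (h | h) | h
  · exact absurd h hu.1
  · exact neighborSet_eq_insert_highDegreeNeighbors h3 h1 hn hB h
  · exact absurd (hN h) hu.2

end Finite

lemma adj_iff_of_forall_notMem_neighborSet_eq {T : Set V} (hT : G.IsClique T)
    (hout : ∀ u ∉ T, G.neighborSet u = T) (a b : V) :
    G.Adj a b ↔ a ≠ b ∧ (a ∈ T ∨ b ∈ T) := by
  have hadj : ∀ a b, a ∉ T → (G.Adj a b ↔ b ∈ T) := fun a b ha => by
    rw [← mem_neighborSet, hout a ha]
  by_cases ha : a ∈ T <;> by_cases hb : b ∈ T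
  · exact ⟨fun h => ⟨h.ne, .inl ha⟩, fun h => hT ha hb h.1⟩
  · rw [G.adj_comm, hadj b a hb]
    exact ⟨fun h => ⟨fun hab => hb (hab ▸ ha), .inl h⟩, fun _ => ha⟩
  · rw [hadj a b ha]
    exact ⟨fun h => ⟨fun hab => ha (hab ▸ h), .inr h⟩, fun h => h.2.resolve_left ha⟩
  · rw [hadj a b ha]
    tauto

lemma nonempty_iso_kTri_of_adj_iff [Fintype V] {T : Set V} (hT : T.ncard = 3)
    (hadj : ∀ a b, G.Adj a b ↔ a ≠ b ∧ (a ∈ T ∨ b ∈ T)) :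
    Nonempty (G ≃g KTri (Fintype.card V - 3)) := by
  classical
  have hc1 : Fintype.card T = 3 := by
    rw [← Nat.card_eq_fintype_card, Nat.card_coe_set_eq, hT]
  have hc2 : Fintype.card (Tᶜ : Set V) = Fintype.card V - 3 := by
    rw [Fintype.card_compl_set, hc1]
  let e : V ≃ Fin 3 ⊕ Fin (Fintype.card V - 3) := (Equiv.Set.sumCompl T).symm.trans
    ((Fintype.equivFinOfCardEq hc1).sumCongr (Fintype.equivFinOfCardEq hc2))
  have hleft : ∀ u, (e u).isLeft ↔ u ∈ T := fun u => by
    by_cases h : u ∈ T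
    · simp [e, Equiv.Set.sumCompl_symm_apply_of_mem h, h]
    · simp [e, Equiv.Set.sumCompl_symm_apply_of_notMem h, h]
  refine ⟨⟨e, fun {a b} => ?_⟩⟩
  simp only [KTri, fromRel_adj, hleft, hadj, e.injective.ne_iff]
  tauto

end SimpleGraph

open SimpleGraph

/-- A 3-connected 1-cyclic graph `G` on `n ≥ 5` vertices is isomorphic to
`K^△_{n-3}` or every vertex of `G` has at least three neighbors of degree at
least 4. -/
theorem stmt_10 {V : Type*} [Fintype V] (G : SimpleGraph V)
    (h3 : G.KConnected 3) (h1 : G.KCyclic 1) (hn : 5 ≤ Fintype.card V) :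
    Nonempty (G ≃g KTri (Fintype.card V - 3)) ∨
      ∀ v : V, 3 ≤ {u | u ∈ G.neighborSet v ∧ 4 ≤ (G.neighborSet u).ncard}.ncard := by
  refine or_iff_not_imp_right.mpr fun hall => ?_
  obtain ⟨v, hv⟩ := not_forall.mp hall
  have hB : (G.highDegreeNeighbors v).ncard ≤ 2 := Nat.le_of_lt_succ (not_le.mp hv)
  obtain ⟨y, hy⟩ : (G.neighborSet v \ G.highDegreeNeighbors v).Nonempty := by
    rw [← ncard_pos, ncard_sdiff' fun u hu => hu.1]
    have := h3.le_ncard_neighborSet v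
    omega
  have hy3 := ncard_neighborSet_eq_three_of_mem_sdiff h3 hy
  have hT := neighborSet_eq_insert_highDegreeNeighbors h3 h1 hn hB hy
  refine nonempty_iso_kTri_of_adj_iff hy3
    (adj_iff_of_forall_notMem_neighborSet_eq (h1.isClique_neighborSet hn hy3) fun u hu => ?_)
  rw [hT] at hu ⊢
  exact neighborSet_eq_insert_of_notMem h3 h1 hn hB hu
end

section
/- There are infinitely many natural numbers n for which there exists a 3-connected 1-cyclic simple graph on n vertices with exactly (15/8)·n edges and with no universal vertex. -/
/-- block index of a vertex -/
def bk {k : ℕ} (u : Fin (8*k)) : ZMod (2*k) := ((u : ℕ) / 4 : ℕ)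

/-- the vertex in block `i` with residue `r` -/
def vtx {k : ℕ} (hk : 3 ≤ k) (i : ZMod (2*k)) (r : Fin 4) : Fin (8*k) :=
  ⟨4 * (ZMod.val i) + r, by
    haveI : NeZero (2*k) := ⟨by omega⟩
    have h1 := ZMod.val_lt i
    have h2 := r.isLt
    omega⟩

def link (k : ℕ) (u v : Fin (8*k)) : Prop :=
  ((u:ℕ) % 4 = 2 ∧ (v:ℕ) % 4 = 1 ∧ bk v = bk u + 1) ∨
  ((u:ℕ) % 4 = 3 ∧ (v:ℕ) % 4 = 3 ∧ bk v = bk u + (k : ZMod (2*k)))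

instance {k : ℕ} (u v : Fin (8*k)) : Decidable (link k u v) := by
  unfold link; infer_instance

def GG (k : ℕ) : SimpleGraph (Fin (8*k)) where
  Adj u v := u ≠ v ∧ ((u:ℕ)/4 = (v:ℕ)/4 ∨ link k u v ∨ link k v u)
  symm := by
    constructor
    rintro u v ⟨h1, h2⟩
    refine ⟨h1.symm, ?_⟩
    rcases h2 with h | h | h
    · exact Or.inl h.symm
    · exact Or.inr (Or.inr h)
    · exact Or.inr (Or.inl h)
  loopless := ⟨fun u h => h.1 rfl⟩

instance {k : ℕ} : DecidableRel (GG k).Adj := fun u v =>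
  decidable_of_iff (u ≠ v ∧ ((u:ℕ)/4 = (v:ℕ)/4 ∨ link k u v ∨ link k v u)) Iff.rfl

section basic
variable {k : ℕ}

lemma neZero2k (hk : 3 ≤ k) : NeZero (2*k) := ⟨by omega⟩

lemma bk_val (hk : 3 ≤ k) (u : Fin (8*k)) : (bk u).val = (u:ℕ)/4 := by
  haveI := neZero2k hk
  exact ZMod.val_cast_of_lt (by have := u.isLt; omega)

lemma bk_inj (hk : 3 ≤ k) {u v : Fin (8*k)} (h : bk u = bk v) : (u:ℕ)/4 = (v:ℕ)/4 := by
  rw [← bk_val hk u, ← bk_val hk v, h]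

lemma vtx_bk (hk : 3 ≤ k) (i : ZMod (2*k)) (r : Fin 4) : bk (vtx hk i r) = i := by
  haveI := neZero2k hk
  have : ((vtx hk i r : ℕ))/4 = i.val := by
    show (4 * i.val + (r:ℕ)) / 4 = i.val
    have := r.isLt; omega
  unfold bk
  rw [this]
  simp [ZMod.natCast_val, ZMod.cast_id]

lemma vtx_res (hk : 3 ≤ k) (i : ZMod (2*k)) (r : Fin 4) : ((vtx hk i r : ℕ)) % 4 = r := by
  show (4 * i.val + (r:ℕ)) % 4 = r
  have := r.isLt; omega

lemma vtx_eq_self (hk : 3 ≤ k) (v : Fin (8*k)) (r : Fin 4) (hr : (v:ℕ) % 4 = r) :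
    vtx hk (bk v) r = v := by
  apply Fin.ext
  show 4 * (bk v).val + (r:ℕ) = (v:ℕ)
  rw [bk_val hk]
  omega

lemma vtx_inj (hk : 3 ≤ k) {i j : ZMod (2*k)} {r s : Fin 4} (h : vtx hk i r = vtx hk j s) :
    i = j ∧ r = s := by
  haveI := neZero2k hk
  have h' : 4 * i.val + (r:ℕ) = 4 * j.val + (s:ℕ) := congrArg Fin.val h
  have hr := r.isLt; have hs := s.isLt
  have : i.val = j.val ∧ (r:ℕ) = (s:ℕ) := by omega
  exact ⟨ZMod.val_injective _ this.1, Fin.ext this.2⟩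
end basic

section adjlem
variable {k : ℕ}

lemma cast_lt_inj (hk : 3 ≤ k) {s t : ℕ} (hs : s < 2*k) (ht : t < 2*k)
    (h : (s : ZMod (2*k)) = (t : ZMod (2*k))) : s = t := by
  haveI := neZero2k hk
  rw [← ZMod.val_cast_of_lt hs, ← ZMod.val_cast_of_lt ht, h]

lemma kcast_ne_zero (hk : 3 ≤ k) : (k : ZMod (2*k)) ≠ 0 := by
  intro h
  have := cast_lt_inj hk (by omega) (by omega) (h.trans (by norm_num : (0 : ZMod (2*k)) = ((0:ℕ) : ZMod (2*k))))
  omega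

lemma oneNeZero' (hk : 3 ≤ k) : (1 : ZMod (2*k)) ≠ 0 := by
  intro h
  have : ((1:ℕ) : ZMod (2*k)) = ((0:ℕ) : ZMod (2*k)) := by push_cast; exact h
  have := cast_lt_inj hk (by omega) (by omega) this
  omega

lemma twok_zero (hk : 3 ≤ k) : ((2*k : ℕ) : ZMod (2*k)) = 0 := ZMod.natCast_self _

lemma add_k_add_k (hk : 3 ≤ k) (i : ZMod (2*k)) : i + k + k = i := by
  have : ((k:ℕ) : ZMod (2*k)) + ((k:ℕ) : ZMod (2*k)) = (((2*k) : ℕ) : ZMod (2*k)) := by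
    push_cast; ring
  rw [add_assoc, this, twok_zero hk, add_zero]

lemma adj_sameBlock (hk : 3 ≤ k) {u v : Fin (8*k)} (hne : u ≠ v) (hb : bk u = bk v) :
    (GG k).Adj u v := ⟨hne, Or.inl (bk_inj hk hb)⟩

lemma adj_cyc (hk : 3 ≤ k) (i : ZMod (2*k)) :
    (GG k).Adj (vtx hk i 2) (vtx hk (i+1) 1) := by
  constructor
  · intro h
    have := vtx_inj hk h
    exact absurd this.2 (by decide)
  · refine Or.inr (Or.inl (Or.inl ⟨?_, ?_, ?_⟩))
    · exact vtx_res hk i 2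
    · exact vtx_res hk (i+1) 1
    · rw [vtx_bk hk, vtx_bk hk]

lemma adj_diag (hk : 3 ≤ k) (i : ZMod (2*k)) :
    (GG k).Adj (vtx hk i 3) (vtx hk (i + k) 3) := by
  constructor
  · intro h
    have h2 := (vtx_inj hk h).1
    exact kcast_ne_zero hk (add_eq_left.mp h2.symm)
  · refine Or.inr (Or.inl (Or.inr ⟨?_, ?_, ?_⟩))
    · exact vtx_res hk i 3
    · exact vtx_res hk (i+k) 3
    · rw [vtx_bk hk, vtx_bk hk]

end adjlem

section master
variable {k : ℕ} (hk : 3 ≤ k) {R : ZMod (2*k) → ZMod (2*k) → Prop}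
variable (hsym : ∀ i j, R i j → R j i) (htrans : ∀ i j l, R i j → R j l → R i l)
variable (hrefl : ∀ i, R i i)

include hk hsym htrans hrefl

omit hk hsym in
lemma chainR (start : ZMod (2*k)) :
    ∀ t : ℕ, (∀ s : ℕ, s < t → R (start + s) (start + s + 1)) → R start (start + t) := by
  intro t
  induction t with
  | zero => intro _; simpa using hrefl start
  | succ t ih =>
    intro h
    have h1 := ih (fun s hs => h s (by omega))
    have h2 := h t (by omega)
    have : start + ((t:ℕ)+1 : ℕ) = start + t + 1 := by push_cast; ring
    rw [this]
    exact htrans _ _ _ h1 h2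

omit hsym htrans hrefl in
/-- helper: every j is start + t for t = (j - start).val -/
lemma decompose (j start : ZMod (2*k)) :
    j = start + (((j - start).val : ℕ) : ZMod (2*k)) := by
  haveI := neZero2k hk
  rw [ZMod.natCast_val, ZMod.cast_id]
  ring

lemma L1 (a : ZMod (2*k)) (HC : ∀ i, i ≠ a → R i (i+1)) : ∀ i j, R i j := by
  haveI := neZero2k hk
  have key : ∀ j, R (a+1) j := by
    intro j
    set t := (j - (a+1)).val with ht
    have htlt : t < 2*k := ZMod.val_lt _
    have main : R (a+1) (a+1+t) := by
      apply chainR htrans hrefl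
      intro s hs
      apply HC
      intro heq
      rw [add_assoc] at heq
      have h0 : ((1 + s : ℕ) : ZMod (2*k)) = 0 := by
        push_cast
        exact add_eq_left.mp heq
      rw [ZMod.natCast_eq_zero_iff] at h0
      have := Nat.le_of_dvd (by omega) h0
      omega
    rw [← decompose hk j (a+1)] at main
    exact main
  intro i j
  exact htrans _ _ _ (hsym _ _ (key i)) (key j)

lemma step_all (hstep : ∀ i, R i (i+1)) : ∀ i j, R i j := by
  haveI := neZero2k hk
  intro i j
  have main : R i (i + ((j - i).val : ℕ)) :=
    chainR htrans hrefl i _ (fun s _ => hstep _)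
  rwa [← decompose hk j i] at main

lemma L2 (a b : ZMod (2*k)) (hab : b ≠ a + (k : ZMod (2*k)))
    (HC : ∀ i, i ≠ a → i ≠ b → R i (i+1)) (HD : ∀ i, R i (i + (k : ZMod (2*k)))) :
    ∀ i j, R i j := by
  apply step_all hk hsym htrans hrefl
  intro i
  by_cases hia : i = a
  · subst hia
    have h1 : R i (i + k) := HD i
    have h2 : R (i + k) (i + k + 1) := by
      apply HC
      · intro h; exact kcast_ne_zero hk (add_eq_left.mp h)
      · intro h; exact hab h.symm
    have h3 : R (i + 1) (i + 1 + k) := HD (i+1)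
    have h4 : R (i + k + 1) (i + 1) := by
      have : i + 1 + k = i + k + 1 := by ring
      rw [this] at h3
      exact hsym _ _ h3
    exact htrans _ _ _ (htrans _ _ _ h1 h2) h4
  · by_cases hib : i = b
    · subst hib
      have h1 : R i (i + k) := HD i
      have h2 : R (i + k) (i + k + 1) := by
        apply HC
        · intro h
          -- i + k = a → i = a + k
          apply hab
          have : i = a - k := by linear_combination h
          rw [this]
          have hnk : -(k : ZMod (2*k)) = (k : ZMod (2*k)) := by
            have h2k := twok_zero hk
            have : ((k:ℕ) : ZMod (2*k)) + ((k:ℕ) : ZMod (2*k)) = (((2*k):ℕ) : ZMod (2*k)) := by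
              push_cast; ring
            rw [h2k] at this
            linear_combination -this
          rw [sub_eq_add_neg, hnk]
        · intro h; exact kcast_ne_zero hk (add_eq_left.mp h)
      have h3 : R (i + 1) (i + 1 + k) := HD (i+1)
      have h4 : R (i + k + 1) (i + 1) := by
        have : i + 1 + k = i + k + 1 := by ring
        rw [this] at h3
        exact hsym _ _ h3
      exact htrans _ _ _ (htrans _ _ _ h1 h2) h4
    · exact HC i hia hib

lemma L3 (a : ZMod (2*k))
    (HC : ∀ i, i ≠ a → i ≠ a + (k : ZMod (2*k)) → R i (i+1))
    (HD : ∀ i, R i (i + (k : ZMod (2*k)))) :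
    ∀ i j, R i j := by
  haveI := neZero2k hk
  have hkval : ((k:ℕ) : ZMod (2*k)).val = k := ZMod.val_cast_of_lt (by omega)
  have key : ∀ j, R (a+1) j := by
    intro j
    set t := (j - (a+1)).val with ht
    have htlt : t < 2*k := ZMod.val_lt _
    by_cases hcase : t < k
    · have main : R (a+1) (a+1+t) := by
        apply chainR htrans hrefl
        intro s hs
        apply HC
        · intro heq
          rw [add_assoc] at heq
          have h0 : ((1 + s : ℕ) : ZMod (2*k)) = 0 := by
            push_cast
            exact add_eq_left.mp heq
          rw [ZMod.natCast_eq_zero_iff] at h0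
          have := Nat.le_of_dvd (by omega) h0
          omega
        · intro heq
          -- a+1+s = a+k  →  1+s = k
          have h0 : ((1 + s : ℕ) : ZMod (2*k)) = ((k:ℕ) : ZMod (2*k)) := by
            push_cast
            linear_combination heq
          have := cast_lt_inj hk (by omega) (by omega) h0
          omega
      rw [← decompose hk j (a+1)] at main
      exact main
    · -- k ≤ t
      push_neg at hcase
      have bridge : R (a+1) (a+1+k) := HD (a+1)
      have main : R (a+1+k) (a+1+k+((t-k : ℕ) : ZMod (2*k))) := by
        apply chainR htrans hrefl
        intro s hs
        apply HC
        · intro heq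
          -- a+1+k+s = a → k+1+s ≡ 0
          have h0 : ((k + 1 + s : ℕ) : ZMod (2*k)) = 0 := by
            push_cast
            linear_combination heq
          rw [ZMod.natCast_eq_zero_iff] at h0
          have := Nat.le_of_dvd (by omega) h0
          omega
        · intro heq
          -- a+1+k+s = a+k → 1+s ≡ 0
          have h0 : ((1 + s : ℕ) : ZMod (2*k)) = 0 := by
            push_cast
            linear_combination heq
          rw [ZMod.natCast_eq_zero_iff] at h0
          have := Nat.le_of_dvd (by omega) h0
          omega
      have hrw : a+1+(k : ZMod (2*k))+((t-k : ℕ) : ZMod (2*k)) = a+1+((t:ℕ) : ZMod (2*k)) := by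
        have : ((t - k : ℕ) : ZMod (2*k)) = ((t:ℕ) : ZMod (2*k)) - ((k:ℕ) : ZMod (2*k)) := by
          push_cast [Nat.cast_sub hcase]
          ring
        rw [this]; ring
      rw [hrw, ← decompose hk j (a+1)] at main
      exact htrans _ _ _ bridge main
  intro i j
  exact htrans _ _ _ (hsym _ _ (key i)) (key j)

end master

section lift
variable {k : ℕ}

lemma vtx_ne (hk : 3 ≤ k) (i : ZMod (2*k)) {r s : Fin 4} (h : r ≠ s) :
    vtx hk i r ≠ vtx hk i s := fun he => h (vtx_inj hk he).2

lemma blockSurvivor (hk : 3 ≤ k) (X : Set (Fin (8*k))) (x y : Fin (8*k))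
    (hX : X ⊆ {x, y}) (j : ZMod (2*k)) : ∃ w, w ∈ Xᶜ ∧ bk w = j := by
  by_cases h0 : vtx hk j 0 ∈ X
  · by_cases h1 : vtx hk j 1 ∈ X
    · by_cases h2 : vtx hk j 2 ∈ X
      · exfalso
        have e0 := hX h0
        have e1 := hX h1
        have e2 := hX h2
        simp only [Set.mem_insert_iff, Set.mem_singleton_iff] at e0 e1 e2
        rcases e0 with e0 | e0 <;> rcases e1 with e1 | e1 <;> rcases e2 with e2 | e2 <;>
          first
          | exact absurd (e0.trans e1.symm) (vtx_ne hk j (by decide))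
          | exact absurd (e0.trans e2.symm) (vtx_ne hk j (by decide))
          | exact absurd (e1.trans e2.symm) (vtx_ne hk j (by decide))
      · exact ⟨vtx hk j 2, h2, vtx_bk hk j 2⟩
    · exact ⟨vtx hk j 1, h1, vtx_bk hk j 1⟩
  · exact ⟨vtx hk j 0, h0, vtx_bk hk j 0⟩

lemma induce_adj_of (X : Set (Fin (8*k))) {u v : Fin (8*k)} (hu : u ∈ Xᶜ) (hv : v ∈ Xᶜ)
    (h : (GG k).Adj u v) : ((GG k).induce Xᶜ).Adj ⟨u, hu⟩ ⟨v, hv⟩ := h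

lemma sameBlockReach (hk : 3 ≤ k) (X : Set (Fin (8*k))) {u v : Fin (8*k)}
    (hu : u ∈ Xᶜ) (hv : v ∈ Xᶜ) (hb : bk u = bk v) :
    ((GG k).induce Xᶜ).Reachable ⟨u, hu⟩ ⟨v, hv⟩ := by
  by_cases h : u = v
  · subst h; rfl
  · exact (induce_adj_of X hu hv (adj_sameBlock hk h hb)).reachable

lemma conn_induced (hk : 3 ≤ k) (X : Set (Fin (8*k))) (x y : Fin (8*k))
    (hX : X ⊆ {x, y}) : ((GG k).induce (Xᶜ : Set (Fin (8*k)))).Connected := by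
  haveI := neZero2k hk
  set R : ZMod (2*k) → ZMod (2*k) → Prop := fun i j =>
    ∀ u v : Fin (8*k), ∀ hu : u ∈ Xᶜ, ∀ hv : v ∈ Xᶜ, bk u = i → bk v = j →
      ((GG k).induce Xᶜ).Reachable ⟨u, hu⟩ ⟨v, hv⟩ with hR
  have hrefl : ∀ i, R i i := fun i u v hu hv hbu hbv =>
    sameBlockReach hk X hu hv (hbu.trans hbv.symm)
  have hsym : ∀ i j, R i j → R j i := fun i j h u v hu hv hbu hbv =>
    (h v u hv hu hbv hbu).symm
  have htrans : ∀ i j l, R i j → R j l → R i l := by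
    intro i j l h1 h2 u v hu hv hbu hbv
    obtain ⟨w, hw, hbw⟩ := blockSurvivor hk X x y hX j
    exact (h1 u w hu hw hbu hbw).trans (h2 w v hw hv hbw hbv)
  -- aliveness predicates
  set Ecyc : ZMod (2*k) → Prop := fun i =>
    vtx hk i 2 ∈ Xᶜ ∧ vtx hk (i+1) 1 ∈ Xᶜ with hEcycdef
  set Ediag : ZMod (2*k) → Prop := fun i =>
    vtx hk i 3 ∈ Xᶜ ∧ vtx hk (i + (k : ZMod (2*k))) 3 ∈ Xᶜ with hEdiagdef
  have HCstep : ∀ i, Ecyc i → R i (i+1) := by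
    intro i ⟨ha, hb⟩ u v hu hv hbu hbv
    refine (sameBlockReach hk X hu ha (by rw [vtx_bk hk, hbu])).trans ?_
    refine SimpleGraph.Reachable.trans ?_ (sameBlockReach hk X hb hv (by rw [vtx_bk hk, hbv]))
    exact (induce_adj_of X ha hb (adj_cyc hk i)).reachable
  have HDstep : ∀ i, Ediag i → R i (i + (k : ZMod (2*k))) := by
    intro i ⟨ha, hb⟩ u v hu hv hbu hbv
    refine (sameBlockReach hk X hu ha (by rw [vtx_bk hk, hbu])).trans ?_
    refine SimpleGraph.Reachable.trans ?_ (sameBlockReach hk X hb hv (by rw [vtx_bk hk, hbv]))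
    exact (induce_adj_of X ha hb (adj_diag hk i)).reachable
  -- extraction
  have memX : ∀ {w : Fin (8*k)}, w ∈ X → w = x ∨ w = y := by
    intro w hw
    have := hX hw
    simpa [Set.mem_insert_iff, Set.mem_singleton_iff] using this
  set killsC : Fin (8*k) → ZMod (2*k) → Prop := fun z i =>
    ((z:ℕ) % 4 = 2 ∧ bk z = i) ∨ ((z:ℕ) % 4 = 1 ∧ bk z = i + 1) with hkC
  have extractC : ∀ i, ¬ Ecyc i → killsC x i ∨ killsC y i := by
    intro i hi
    rw [hEcycdef, not_and_or] at hi
    rcases hi with hi | hi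
    · have : vtx hk i 2 ∈ X := by simpa using hi
      rcases memX this with he | he
      · exact Or.inl (Or.inl ⟨by rw [← he]; exact vtx_res hk i 2, by rw [← he]; exact vtx_bk hk i 2⟩)
      · exact Or.inr (Or.inl ⟨by rw [← he]; exact vtx_res hk i 2, by rw [← he]; exact vtx_bk hk i 2⟩)
    · have : vtx hk (i+1) 1 ∈ X := by simpa using hi
      rcases memX this with he | he
      · exact Or.inl (Or.inr ⟨by rw [← he]; exact vtx_res hk (i+1) 1, by rw [← he]; exact vtx_bk hk (i+1) 1⟩)
      · exact Or.inr (Or.inr ⟨by rw [← he]; exact vtx_res hk (i+1) 1, by rw [← he]; exact vtx_bk hk (i+1) 1⟩)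
  have extractD : ∀ i, ¬ Ediag i →
      ((x:ℕ) % 4 = 3 ∨ (y:ℕ) % 4 = 3) := by
    intro i hi
    rw [hEdiagdef, not_and_or] at hi
    rcases hi with hi | hi
    · have : vtx hk i 3 ∈ X := by simpa using hi
      rcases memX this with he | he
      · exact Or.inl (by rw [← he]; exact vtx_res hk i 3)
      · exact Or.inr (by rw [← he]; exact vtx_res hk i 3)
    · have : vtx hk (i + (k : ZMod (2*k))) 3 ∈ X := by simpa using hi
      rcases memX this with he | he
      · exact Or.inl (by rw [← he]; exact vtx_res hk _ 3)
      · exact Or.inr (by rw [← he]; exact vtx_res hk _ 3)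
  -- case analysis giving ∀ i j, R i j
  have main : ∀ i j, R i j := by
    by_cases hx12 : (x:ℕ) % 4 = 1 ∨ (x:ℕ) % 4 = 2
    · by_cases hy12 : (y:ℕ) % 4 = 1 ∨ (y:ℕ) % 4 = 2
      · -- both potentially kill cycle edges, no diagonals die
        set a : ZMod (2*k) := if (x:ℕ) % 4 = 2 then bk x else bk x - 1 with hadef
        set b : ZMod (2*k) := if (y:ℕ) % 4 = 2 then bk y else bk y - 1 with hbdef
        have killx : ∀ i, killsC x i → i = a := by
          intro i hkill
          rcases hkill with ⟨h2, hb2⟩ | ⟨h1, hb1⟩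
          · rw [hadef, if_pos h2, hb2]
          · rw [hadef, if_neg (by omega), hb1]; ring
        have killy : ∀ i, killsC y i → i = b := by
          intro i hkill
          rcases hkill with ⟨h2, hb2⟩ | ⟨h1, hb1⟩
          · rw [hbdef, if_pos h2, hb2]
          · rw [hbdef, if_neg (by omega), hb1]; ring
        have HD : ∀ i, R i (i + (k : ZMod (2*k))) := by
          intro i
          apply HDstep
          by_contra hdead
          rcases extractD i hdead with h3 | h3 <;> omega
        by_cases hab : b = a + (k : ZMod (2*k))
        · apply L3 hk hsym htrans hrefl a _ HD
          intro i hia hiak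
          apply HCstep
          by_contra hdead
          rcases extractC i hdead with hkill | hkill
          · exact hia (killx i hkill)
          · exact hiak (by rw [← hab]; exact killy i hkill)
        · apply L2 hk hsym htrans hrefl a b hab _ HD
          intro i hia hib
          apply HCstep
          by_contra hdead
          rcases extractC i hdead with hkill | hkill
          · exact hia (killx i hkill)
          · exact hib (killy i hkill)
      · -- only x can kill a cycle edge
        set a : ZMod (2*k) := if (x:ℕ) % 4 = 2 then bk x else bk x - 1 with hadef
        apply L1 hk hsym htrans hrefl a
        intro i hia
        apply HCstep
        by_contra hdead
        rcases extractC i hdead with hkill | hkill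
        · apply hia
          rcases hkill with ⟨h2, hb2⟩ | ⟨h1, hb1⟩
          · rw [hadef, if_pos h2, hb2]
          · rw [hadef, if_neg (by omega), hb1]; ring
        · rcases hkill with ⟨h2, _⟩ | ⟨h1, _⟩ <;> exact hy12 (by omega)
    · by_cases hy12 : (y:ℕ) % 4 = 1 ∨ (y:ℕ) % 4 = 2
      · set a : ZMod (2*k) := if (y:ℕ) % 4 = 2 then bk y else bk y - 1 with hadef
        apply L1 hk hsym htrans hrefl a
        intro i hia
        apply HCstep
        by_contra hdead
        rcases extractC i hdead with hkill | hkill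
        · rcases hkill with ⟨h2, _⟩ | ⟨h1, _⟩ <;> exact hx12 (by omega)
        · apply hia
          rcases hkill with ⟨h2, hb2⟩ | ⟨h1, hb1⟩
          · rw [hadef, if_pos h2, hb2]
          · rw [hadef, if_neg (by omega), hb1]; ring
      · apply L1 hk hsym htrans hrefl 0
        intro i _
        apply HCstep
        by_contra hdead
        rcases extractC i hdead with hkill | hkill
        · rcases hkill with ⟨h2, _⟩ | ⟨h1, _⟩ <;> exact hx12 (by omega)
        · rcases hkill with ⟨h2, _⟩ | ⟨h1, _⟩ <;> exact hy12 (by omega)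
  rw [SimpleGraph.connected_iff]
  constructor
  · rintro ⟨u, hu⟩ ⟨v, hv⟩
    exact main (bk u) (bk v) u v hu hv rfl rfl
  · obtain ⟨w, hw, _⟩ := blockSurvivor hk X x y hX 0
    exact ⟨⟨w, hw⟩⟩

end lift

section cyclic

lemma triangle_not_acyclic {V : Type*} (G : SimpleGraph V) (a b c : V)
    (hab : G.Adj a b) (hbc : G.Adj b c) (hca : G.Adj c a) : ¬ G.IsAcyclic := by
  intro h
  have hne1 : a ≠ b := hab.ne
  have hne2 : b ≠ c := hbc.ne
  have hne3 : c ≠ a := hca.ne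
  exact h (SimpleGraph.Walk.cons hab (SimpleGraph.Walk.cons hbc (SimpleGraph.Walk.cons hca SimpleGraph.Walk.nil)))
    (by
      rw [SimpleGraph.Walk.isCycle_def]
      refine ⟨⟨?_⟩, by simp, ?_⟩
      · simp [Sym2.eq_iff]
        refine ⟨⟨?_, ?_⟩, ?_⟩ <;> tauto
      · simp [hne1, hne2, hne3, hne1.symm, hne2.symm, hne3.symm])

end cyclic

section kcyc
variable {k : ℕ}

def resF (v : Fin (8*k)) : Fin 4 := ⟨(v:ℕ) % 4, by omega⟩

lemma vtx_resF (hk : 3 ≤ k) (v : Fin (8*k)) : vtx hk (bk v) (resF v) = v :=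
  vtx_eq_self hk v (resF v) rfl

lemma mate_adj (hk : 3 ≤ k) (v : Fin (8*k)) (t : Fin 4) (ht : t ≠ 0) :
    (GG k).Adj v (vtx hk (bk v) (resF v + t)) := by
  have hne : v ≠ vtx hk (bk v) (resF v + t) := by
    conv_lhs => rw [← vtx_resF hk v]
    apply vtx_ne hk
    intro h
    exact ht (by omega)
  exact adj_sameBlock hk hne (by rw [vtx_bk hk])

lemma mates_adj (hk : 3 ≤ k) (v : Fin (8*k)) (t s : Fin 4) (hts : t ≠ s) :
    (GG k).Adj (vtx hk (bk v) (resF v + t)) (vtx hk (bk v) (resF v + s)) := by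
  refine adj_sameBlock hk ?_ (by rw [vtx_bk hk, vtx_bk hk])
  apply vtx_ne hk
  intro h
  exact hts (by omega)

lemma gg_kcyclic (hk : 3 ≤ k) : (GG k).KCyclic 1 := by
  intro S hS hcard
  right
  obtain ⟨v, hv⟩ : ∃ v, S = {v} := by
    rcases Set.ncard_eq_one.mp (le_antisymm hcard ((Set.ncard_pos (Set.toFinite S)).mpr hS)) with ⟨v, hv⟩
    exact ⟨v, hv⟩
  subst hv
  have hmem : ∀ t : Fin 4, t ≠ 0 →
      vtx hk (bk v) (resF v + t) ∈ (GG k).setNbhd {v} := by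
    intro t ht
    refine ⟨?_, v, rfl, mate_adj hk v t ht⟩
    simp only [Set.mem_singleton_iff]
    exact (mate_adj hk v t ht).ne'
  apply triangle_not_acyclic _ ⟨_, hmem 1 (by decide)⟩ ⟨_, hmem 2 (by decide)⟩ ⟨_, hmem 3 (by decide)⟩
  · exact mates_adj hk v 1 2 (by decide)
  · exact mates_adj hk v 2 3 (by decide)
  · exact mates_adj hk v 3 1 (by decide)

end kcyc

section counting
variable {k : ℕ}

def mates (hk : 3 ≤ k) (v : Fin (8*k)) : Finset (Fin (8*k)) :=
  (Finset.univ.image (fun r : Fin 4 => vtx hk (bk v) r)).erase v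

def partner (hk : 3 ≤ k) (v : Fin (8*k)) : Fin (8*k) :=
  if (v:ℕ) % 4 = 1 then vtx hk (bk v - 1) 2
  else if (v:ℕ) % 4 = 2 then vtx hk (bk v + 1) 1
  else vtx hk (bk v + (k : ZMod (2*k))) 3

lemma bk_eq_of_div (hk : 3 ≤ k) {u v : Fin (8*k)} (h : (u:ℕ)/4 = (v:ℕ)/4) :
    bk u = bk v := by unfold bk; rw [h]

lemma adj_cases (hk : 3 ≤ k) {v u : Fin (8*k)} (h : (GG k).Adj v u) :
    (bk u = bk v) ∨ ((v:ℕ) % 4 ≠ 0 ∧ u = partner hk v) := by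
  obtain ⟨hne, hcase⟩ := h
  rcases hcase with hsb | hl | hl
  · exact Or.inl (bk_eq_of_div hk hsb.symm)
  · rcases hl with ⟨hv2, hu1, hb⟩ | ⟨hv3, hu3, hb⟩
    · refine Or.inr ⟨by omega, ?_⟩
      rw [partner, if_neg (by omega), if_pos hv2]
      rw [← vtx_eq_self hk u 1 hu1, hb]
    · refine Or.inr ⟨by omega, ?_⟩
      rw [partner, if_neg (by omega), if_neg (by omega)]
      rw [← vtx_eq_self hk u 3 hu3, hb]
  · rcases hl with ⟨hu2, hv1, hb⟩ | ⟨hu3, hv3, hb⟩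
    · refine Or.inr ⟨by omega, ?_⟩
      rw [partner, if_pos hv1]
      rw [← vtx_eq_self hk u 2 hu2]
      congr 1
      linear_combination -hb
    · refine Or.inr ⟨by omega, ?_⟩
      rw [partner, if_neg (by omega), if_neg (by omega)]
      rw [← vtx_eq_self hk u 3 hu3]
      congr 1
      rw [hb, add_k_add_k hk]

lemma partner_adj (hk : 3 ≤ k) (v : Fin (8*k)) (h : (v:ℕ) % 4 ≠ 0) :
    (GG k).Adj v (partner hk v) := by
  have hv4 : (v:ℕ) % 4 < 4 := by omega
  rcases (by omega : (v:ℕ) % 4 = 1 ∨ (v:ℕ) % 4 = 2 ∨ (v:ℕ) % 4 = 3) with h1 | h2 | h3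
  · rw [partner, if_pos h1]
    have := (adj_cyc hk (bk v - 1)).symm
    rw [sub_add_cancel] at this
    rwa [vtx_eq_self hk v 1 h1] at this
  · rw [partner, if_neg (by omega), if_pos h2]
    have := adj_cyc hk (bk v)
    rwa [vtx_eq_self hk v 2 h2] at this
  · rw [partner, if_neg (by omega), if_neg (by omega)]
    have := adj_diag hk (bk v)
    rwa [vtx_eq_self hk v 3 h3] at this

lemma partner_bk_ne (hk : 3 ≤ k) (v : Fin (8*k)) (h : (v:ℕ) % 4 ≠ 0) :
    bk (partner hk v) ≠ bk v := by
  rcases (by omega : (v:ℕ) % 4 = 1 ∨ (v:ℕ) % 4 = 2 ∨ (v:ℕ) % 4 = 3) with h1 | h2 | h3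
  · rw [partner, if_pos h1, vtx_bk hk]
    intro he
    have : (1 : ZMod (2*k)) = 0 := by linear_combination -he
    exact oneNeZero' hk this
  · rw [partner, if_neg (by omega), if_pos h2, vtx_bk hk]
    intro he
    exact oneNeZero' hk (add_eq_left.mp he)
  · rw [partner, if_neg (by omega), if_neg (by omega), vtx_bk hk]
    intro he
    exact kcast_ne_zero hk (add_eq_left.mp he)

lemma mem_mates_iff (hk : 3 ≤ k) (v u : Fin (8*k)) :
    u ∈ mates hk v ↔ u ≠ v ∧ bk u = bk v := by
  unfold mates
  simp only [Finset.mem_erase, Finset.mem_image, Finset.mem_univ, true_and]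
  constructor
  · rintro ⟨hne, r, hr⟩
    exact ⟨hne, by rw [← hr, vtx_bk hk]⟩
  · rintro ⟨hne, hb⟩
    exact ⟨hne, resF u, by rw [← hb]; exact vtx_eq_self hk u (resF u) rfl⟩

lemma card_mates (hk : 3 ≤ k) (v : Fin (8*k)) : (mates hk v).card = 3 := by
  unfold mates
  rw [Finset.card_erase_of_mem, Finset.card_image_of_injective]
  · simp
  · intro r s h
    exact (vtx_inj hk h).2
  · exact Finset.mem_image.mpr ⟨resF v, Finset.mem_univ _, vtx_eq_self hk v (resF v) rfl⟩

lemma degree_eq (hk : 3 ≤ k) (v : Fin (8*k)) :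
    (GG k).degree v = if (v:ℕ) % 4 = 0 then 3 else 4 := by
  rw [← SimpleGraph.card_neighborFinset_eq_degree]
  by_cases h0 : (v:ℕ) % 4 = 0
  · rw [if_pos h0, ← card_mates hk v]
    congr 1
    ext u
    rw [SimpleGraph.mem_neighborFinset, mem_mates_iff hk]
    constructor
    · intro h
      rcases adj_cases hk h with hb | ⟨hne, _⟩
      · exact ⟨h.ne', hb⟩
      · omega
    · rintro ⟨hne, hb⟩
      exact adj_sameBlock hk hne.symm hb.symm
  · rw [if_neg h0]
    have hchar : (GG k).neighborFinset v = insert (partner hk v) (mates hk v) := by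
      ext u
      rw [SimpleGraph.mem_neighborFinset, Finset.mem_insert, mem_mates_iff hk]
      constructor
      · intro h
        rcases adj_cases hk h with hb | ⟨_, hp⟩
        · exact Or.inr ⟨h.ne', hb⟩
        · exact Or.inl hp
      · rintro (hp | ⟨hne, hb⟩)
        · rw [hp]; exact partner_adj hk v h0
        · exact adj_sameBlock hk hne.symm hb.symm
    rw [hchar, Finset.card_insert_of_notMem, card_mates hk v]
    rw [mem_mates_iff hk]
    push_neg
    intro _
    exact partner_bk_ne hk v h0

lemma card_res0 (hk : 3 ≤ k) :
    (Finset.univ.filter (fun v : Fin (8*k) => (v:ℕ) % 4 = 0)).card = 2*k := by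
  rw [← Fintype.card_fin (2*k)]
  rw [← Finset.card_univ]
  refine Finset.card_bij' (fun (v : Fin (8*k)) _ => (⟨(v:ℕ)/4, by have := v.isLt; omega⟩ : Fin (2*k)))
    (fun (i : Fin (2*k)) _ => (⟨4*(i:ℕ), by have := i.isLt; omega⟩ : Fin (8*k))) ?_ ?_ ?_ ?_
  · intro v hv
    exact Finset.mem_univ _
  · intro i _
    simp only [Finset.mem_filter, Finset.mem_univ, true_and]
    show (4*(i:ℕ)) % 4 = 0
    omega
  · intro v hv
    simp only [Finset.mem_filter] at hv
    apply Fin.ext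
    show 4 * ((v:ℕ)/4) = (v:ℕ)
    omega
  · intro i hi
    apply Fin.ext
    show (4*(i:ℕ))/4 = (i:ℕ)
    omega

lemma sum_degrees (hk : 3 ≤ k) : ∑ v : Fin (8*k), (GG k).degree v = 30*k := by
  have : ∀ v : Fin (8*k), (GG k).degree v = if (v:ℕ) % 4 = 0 then 3 else 4 :=
    degree_eq hk
  rw [Finset.sum_congr rfl (fun v _ => this v)]
  rw [Finset.sum_ite, Finset.sum_const, Finset.sum_const]
  have h1 := card_res0 hk
  have h2 : (Finset.univ.filter (fun v : Fin (8*k) => ¬ (v:ℕ) % 4 = 0)).card = 6*k := by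
    have := Finset.card_filter_add_card_filter_not (s := (Finset.univ : Finset (Fin (8*k))))
      (p := fun v : Fin (8*k) => (v:ℕ) % 4 = 0)
    simp only [Finset.card_univ, Fintype.card_fin] at this
    omega
  rw [h1, h2]
  simp [mul_comm]
  ring

lemma edge_count (hk : 3 ≤ k) : (GG k).edgeFinset.card = 15*k := by
  have h := SimpleGraph.sum_degrees_eq_twice_card_edges (GG k)
  rw [sum_degrees hk] at h
  omega

end counting

section final
variable {k : ℕ}

lemma no_universal (hk : 3 ≤ k) (v : Fin (8*k)) :
    ∃ u : Fin (8*k), u ≠ v ∧ ¬ (GG k).Adj v u := by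
  refine ⟨vtx hk (bk v + 1) 0, ?_, ?_⟩
  · intro he
    have : bk (vtx hk (bk v + 1) 0) = bk v := by rw [he]
    rw [vtx_bk hk] at this
    exact oneNeZero' hk (add_eq_left.mp this)
  · rintro ⟨hne, hc⟩
    have hres : ((vtx hk (bk v + 1) 0 : Fin (8*k)) : ℕ) % 4 = 0 := vtx_res hk _ 0
    rcases hc with hsb | hl | hl
    · have : bk (vtx hk (bk v + 1) 0) = bk v := bk_eq_of_div hk (by omega)
      rw [vtx_bk hk] at this
      exact oneNeZero' hk (add_eq_left.mp this)
    · rcases hl with ⟨_, h1, _⟩ | ⟨_, h3, _⟩ <;> omega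
    · rcases hl with ⟨h2, _, _⟩ | ⟨h3, _, _⟩ <;> omega

lemma subset_pair (hk : 3 ≤ k) (X : Set (Fin (8*k))) (h : X.ncard < 3) :
    ∃ x y : Fin (8*k), X ⊆ {x, y} := by
  have hfin := Set.toFinite X
  have z : Fin (8*k) := ⟨0, by omega⟩
  interval_cases hn : X.ncard
  · rw [Set.ncard_eq_zero hfin] at hn
    exact ⟨z, z, by rw [hn]; exact Set.empty_subset _⟩
  · rw [Set.ncard_eq_one] at hn
    obtain ⟨a, ha⟩ := hn
    exact ⟨a, a, by rw [ha]; intro w hw; exact Set.mem_insert_iff.mpr (Or.inl hw)⟩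
  · rw [Set.ncard_eq_two] at hn
    obtain ⟨a, b, _, hab⟩ := hn
    exact ⟨a, b, by rw [hab]⟩

lemma gg_kconnected (hk : 3 ≤ k) : (GG k).KConnected 3 := by
  constructor
  · simp only [Fintype.card_fin]
    omega
  · intro X hX
    obtain ⟨x, y, hxy⟩ := subset_pair hk X hX
    exact conn_induced hk X x y hxy

end final

/-- There are infinitely many `n` admitting a 3-connected 1-cyclic graph on `n`
vertices with exactly `(15/8)·n` edges and no universal vertex. -/
theorem stmt_12 : ∀ N : ℕ, ∃ n : ℕ, N ≤ n ∧ ∃ G : SimpleGraph (Fin n),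
    G.KConnected 3 ∧ G.KCyclic 1 ∧ 8 * G.edgeSet.ncard = 15 * n ∧
    ∀ v : Fin n, ∃ u : Fin n, u ≠ v ∧ ¬ G.Adj v u := by
  intro N
  set k := max 3 N with hkdef
  have hk : 3 ≤ k := le_max_left _ _
  refine ⟨8 * k, by omega, GG k, gg_kconnected hk, gg_kcyclic hk, ?_, ?_⟩
  · rw [← SimpleGraph.coe_edgeFinset, Set.ncard_coe_finset, edge_count hk]
    ring
  · intro v
    exact no_universal hk v
end

section
/- Let G be a simple graph on n vertices in which every vertex has degree at least 4, every vertex of degree 4 has at most one neighbor of degree 4, and every vertex of degree at least 5 has at least two neighbors of degree at least 5. Then the number of edges of G satisfies e(G) ≥ (9/4)·n. -/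
/-- If every vertex of `G` has degree at least 4, every degree-4 vertex has at most
one neighbor of degree 4, and every vertex of degree at least 5 has at least two
neighbors of degree at least 5, then `e(G) ≥ (9/4)·n`. -/
theorem stmt_16 {V : Type*} [Fintype V] (G : SimpleGraph V)
    (hdeg : ∀ v : V, 4 ≤ (G.neighborSet v).ncard)
    (h4 : ∀ v : V, (G.neighborSet v).ncard = 4 →
      {u | u ∈ G.neighborSet v ∧ (G.neighborSet u).ncard = 4}.ncard ≤ 1)
    (h5 : ∀ v : V, 5 ≤ (G.neighborSet v).ncard →
      2 ≤ {u | u ∈ G.neighborSet v ∧ 5 ≤ (G.neighborSet u).ncard}.ncard) :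
    (9 : ℝ) / 4 * Fintype.card V ≤ (G.edgeSet.ncard : ℝ) := by
  classical
  have hdc : ∀ v, (G.neighborSet v).ncard = G.degree v := fun v => by
    rw [Set.ncard_eq_toFinset_card']; rfl
  simp only [hdc] at hdeg h4 h5
  set L : Finset V := Finset.univ.filter (fun v => G.degree v = 4) with hL
  set H : Finset V := Finset.univ.filter (fun v => 5 ≤ G.degree v) with hH
  -- high/low neighbors
  set HN : V → Finset V := fun v => (G.neighborFinset v).filter (fun u => 5 ≤ G.degree u)
    with hHN
  set LN : V → Finset V := fun v => (G.neighborFinset v).filter (fun u => G.degree u = 4)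
    with hLN
  have hsplit : ∀ v, (HN v).card + (LN v).card = G.degree v := by
    intro v
    have := Finset.card_filter_add_card_filter_not
      (s := G.neighborFinset v) (p := fun u => 5 ≤ G.degree u)
    have heq : Finset.filter (fun a => ¬5 ≤ G.degree a) (G.neighborFinset v) = LN v := by
      apply Finset.filter_congr
      intro u _
      have := hdeg u
      omega
    rw [show G.degree v = (G.neighborFinset v).card from rfl, ← this, heq]
  -- conversion of h4 / h5 to Finset cards
  have h4' : ∀ v ∈ L, (LN v).card ≤ 1 := by
    intro v hv
    have hv4 : G.degree v = 4 := by simpa [hL] using hv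
    have := h4 v hv4
    have hset : {u | u ∈ G.neighborSet v ∧ G.degree u = 4} = ↑(LN v) := by
      ext u
      simp [hLN, SimpleGraph.mem_neighborFinset, SimpleGraph.mem_neighborSet]
    rwa [hset, Set.ncard_coe_finset] at this
  have h5' : ∀ v ∈ H, 2 ≤ (HN v).card := by
    intro v hv
    have hv5 : 5 ≤ G.degree v := by simpa [hH] using hv
    have := h5 v hv5
    have hset : {u | u ∈ G.neighborSet v ∧ 5 ≤ G.degree u} = ↑(HN v) := by
      ext u
      simp [hHN, SimpleGraph.mem_neighborFinset, SimpleGraph.mem_neighborSet]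
    rwa [hset, Set.ncard_coe_finset] at this
  -- per-vertex inequalities
  have ha : ∀ v ∈ L, 3 ≤ (HN v).card := by
    intro v hv
    have hv4 : G.degree v = 4 := by simpa [hL] using hv
    have := hsplit v
    have := h4' v hv
    omega
  have hb : ∀ v ∈ H, (LN v).card + 2 ≤ G.degree v := by
    intro v hv
    have := hsplit v
    have := h5' v hv
    omega
  -- double counting: edges between L and H
  have hHNcard : ∀ v, (HN v).card = ∑ u ∈ H, if G.Adj v u then 1 else 0 := by
    intro v
    rw [← Finset.sum_filter]
    have : HN v = H.filter (fun u => G.Adj v u) := by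
      ext u
      simp [hHN, hH, SimpleGraph.mem_neighborFinset, and_comm]
    rw [this]
    simp
  have hLNcard : ∀ v, (LN v).card = ∑ u ∈ L, if G.Adj v u then 1 else 0 := by
    intro v
    rw [← Finset.sum_filter]
    have : LN v = L.filter (fun u => G.Adj v u) := by
      ext u
      simp [hLN, hL, SimpleGraph.mem_neighborFinset, and_comm]
    rw [this]
    simp
  have hdouble : ∑ v ∈ L, (HN v).card = ∑ u ∈ H, (LN u).card := by
    simp only [hHNcard, hLNcard]
    rw [Finset.sum_comm]
    apply Finset.sum_congr rfl
    intro u _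
    apply Finset.sum_congr rfl
    intro v _
    simp [G.adj_comm]
  -- sums
  set S := ∑ u ∈ H, G.degree u with hS
  have key1 : 3 * L.card + 2 * H.card ≤ S := by
    have h1 : 3 * L.card ≤ ∑ v ∈ L, (HN v).card := by
      calc 3 * L.card = ∑ _v ∈ L, 3 := by rw [Finset.sum_const, smul_eq_mul, mul_comm]
        _ ≤ ∑ v ∈ L, (HN v).card := Finset.sum_le_sum ha
    have h2 : (∑ u ∈ H, (LN u).card) + 2 * H.card ≤ S := by
      calc (∑ u ∈ H, (LN u).card) + 2 * H.card
          = ∑ u ∈ H, ((LN u).card + 2) := by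
            rw [Finset.sum_add_distrib, Finset.sum_const, smul_eq_mul, mul_comm]
        _ ≤ S := Finset.sum_le_sum hb
    rw [hdouble] at h1; omega
    -- combine
  have key2 : 5 * H.card ≤ S := by
    calc 5 * H.card = ∑ _u ∈ H, 5 := by rw [Finset.sum_const, smul_eq_mul, mul_comm]
      _ ≤ S := Finset.sum_le_sum (fun u hu => (Finset.mem_filter.mp hu).2)
  have hcardsplit : L.card + H.card = Fintype.card V := by
    have := Finset.card_filter_add_card_filter_not
      (s := (Finset.univ : Finset V)) (p := fun v => G.degree v = 4)
    have heq : Finset.filter (fun a => ¬G.degree a = 4) Finset.univ = H := by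
      apply Finset.filter_congr
      intro u _
      have := hdeg u
      omega
    rw [← Finset.card_univ, ← this, heq]
  have hsumsplit : 4 * L.card + S = ∑ v, G.degree v := by
    have := Finset.sum_filter_add_sum_filter_not Finset.univ
      (fun v => G.degree v = 4) (fun v => G.degree v)
    rw [← this]
    congr 1
    · rw [Finset.sum_congr rfl (fun v hv => (Finset.mem_filter.mp hv).2),
        Finset.sum_const, smul_eq_mul, mul_comm]
    · have heq : Finset.filter (fun a => ¬G.degree a = 4) Finset.univ = H := by
        apply Finset.filter_congr
        intro u _
        have := hdeg u
        omega
      rw [heq]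
  have htwice : ∑ v, G.degree v = 2 * G.edgeFinset.card :=
    G.sum_degrees_eq_twice_card_edges
  have hkey : 3 * L.card + 2 * H.card ≤ S := key1
  have hE : G.edgeSet.ncard = G.edgeFinset.card := by
    rw [Set.ncard_eq_toFinset_card']
    congr 1
  have hfin : 9 * Fintype.card V ≤ 4 * G.edgeSet.ncard := by
    rw [hE]
    omega
  have hcast : (9 : ℝ) * Fintype.card V ≤ 4 * G.edgeSet.ncard := by exact_mod_cast hfin
  linarith
end

section
/- Let G be a simple graph on n vertices in which every vertex has degree at least 3 and every vertex has at least three neighbors of degree at least 4. Then the number of edges of G satisfies e(G) ≥ (15/8)·n. -/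
/-- If every vertex of `G` has degree at least 3 and at least three neighbors of
degree at least 4, then `e(G) ≥ (15/8)·n`. -/
theorem stmt_17 {V : Type*} [Fintype V] (G : SimpleGraph V)
    (hdeg : ∀ v : V, 3 ≤ (G.neighborSet v).ncard)
    (h3 : ∀ v : V, 3 ≤ {u | u ∈ G.neighborSet v ∧ 4 ≤ (G.neighborSet u).ncard}.ncard) :
    (15 : ℝ) / 8 * Fintype.card V ≤ (G.edgeSet.ncard : ℝ) := by
  classical
  have hdc : ∀ u : V, (G.neighborSet u).ncard = G.degree u := by
    intro u
    rw [Set.ncard_eq_toFinset_card']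
    simp [SimpleGraph.degree, SimpleGraph.neighborFinset]
  have hdeg' : ∀ v : V, 3 ≤ G.degree v := fun v => (hdc v) ▸ hdeg v
  set A : Finset V := Finset.univ.filter (fun v => 4 ≤ G.degree v) with hA
  set B : Finset V := Finset.univ.filter (fun v => ¬ 4 ≤ G.degree v) with hB
  have h3' : ∀ v : V, 3 ≤ (Finset.univ.filter (fun u => G.Adj v u ∧ 4 ≤ G.degree u)).card := by
    intro v
    have hset : {u | u ∈ G.neighborSet v ∧ 4 ≤ (G.neighborSet u).ncard} =
        ↑(Finset.univ.filter (fun u => G.Adj v u ∧ 4 ≤ G.degree u)) := by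
      ext u
      simp [SimpleGraph.mem_neighborSet, hdc u]
    have := h3 v
    rwa [hset, Set.ncard_coe_finset] at this
  have key : 3 * Fintype.card V ≤ ∑ a ∈ A, G.degree a := by
    calc 3 * Fintype.card V = ∑ _v : V, 3 := by simp [mul_comm]
      _ ≤ ∑ v : V, (Finset.univ.filter (fun u => G.Adj v u ∧ 4 ≤ G.degree u)).card :=
          Finset.sum_le_sum (fun v _ => h3' v)
      _ = ∑ v : V, ∑ u : V, if G.Adj v u ∧ 4 ≤ G.degree u then 1 else 0 := by
          simp only [Finset.card_filter]
      _ = ∑ u : V, ∑ v : V, if G.Adj v u ∧ 4 ≤ G.degree u then 1 else 0 := Finset.sum_comm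
      _ = ∑ a ∈ A, G.degree a := by
          rw [Finset.sum_filter]
          refine Finset.sum_congr rfl (fun u _ => ?_)
          by_cases hu : 4 ≤ G.degree u
          · simp only [hu, and_true, if_true]
            rw [← Finset.card_filter]
            congr 1
            ext x
            simp [G.adj_comm]
          · simp [hu]
  have hAB : A.card + B.card = Fintype.card V := by
    rw [hA, hB, Finset.card_filter_add_card_filter_not, Finset.card_univ]
  have hsum : ∑ v : V, G.degree v = ∑ a ∈ A, G.degree a + ∑ b ∈ B, G.degree b := by
    rw [hA, hB, ← Finset.sum_filter_add_sum_filter_not Finset.univ (fun v => 4 ≤ G.degree v)]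
  have hSA : 4 * A.card ≤ ∑ a ∈ A, G.degree a := by
    have := Finset.card_nsmul_le_sum A (fun a => G.degree a) 4
      (fun a ha => by simpa using (Finset.mem_filter.mp ha).2)
    simpa [mul_comm] using this
  have hSB : 3 * B.card ≤ ∑ b ∈ B, G.degree b := by
    have := Finset.card_nsmul_le_sum B (fun b => G.degree b) 3 (fun b _ => hdeg' b)
    simpa [mul_comm] using this
  have h2e : ∑ v : V, G.degree v = 2 * G.edgeFinset.card :=
    G.sum_degrees_eq_twice_card_edges
  have hnat : 15 * Fintype.card V ≤ 8 * G.edgeFinset.card := by omega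
  have hcard : G.edgeSet.ncard = G.edgeFinset.card := by
    rw [Set.ncard_eq_toFinset_card']
    congr 1
  rw [hcard]
  have := (Nat.cast_le (α := ℝ)).mpr hnat
  push_cast at this
  linarith
end
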